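/- arXiv:1503.00190 — 13 statements merged into one kernel-verified Lean document; each statement's English description precedes it below -/
import Mathlib

section
/- Let κ be a connectivity function on a finite set U and let X, Y ⊆ U be disjoint nonempty sets. Then among all (X,Y)-separations of minimum order there is a unique one, Z, such that Z ⊆ Z' for every minimum-order (X,Y)-separation Z' (the leftmost minimum (X,Y)-separation). -/
/-- `κ` is symmetric. -/
def SymmetricFn {α : Type*} (κ : Set α → ℕ) : Prop := ∀ X : Set α, κ Xᶜ = κ X

/-- `κ` is submodular. -/
def Submodular {α : Type*} (κ : Set α → ℕ) : Prop :=
  ∀ X Y : Set α, κ (X ∩ Y) + κ (X ∪ Y) ≤ κ X + κ Y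

/-- A connectivity function: symmetric, submodular, and zero on the empty set. -/
def ConnFn {α : Type*} (κ : Set α → ℕ) : Prop :=
  SymmetricFn κ ∧ Submodular κ ∧ κ ∅ = 0

/-- An (X,Y)-separation: a set Z with X ⊆ Z ⊆ Yᶜ. -/
def IsSep {α : Type*} (X Y Z : Set α) : Prop := X ⊆ Z ∧ Z ⊆ Yᶜ

/-- A minimum-order (X,Y)-separation. -/
def IsMinSep {α : Type*} (κ : Set α → ℕ) (X Y Z : Set α) : Prop :=
  IsSep X Y Z ∧ ∀ Z' : Set α, IsSep X Y Z' → κ Z ≤ κ Z'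

/-!
Submodularity forces the intersection of two minimum `(X,Y)`-separations to be minimum again,
since their union is an `(X,Y)`-separation and so has order at least the minimum. Over a finite
ground set the minimum separations therefore form a finite, nonempty, intersection-closed family,
whose intersection is its least member.
-/

section

variable {α : Type*} {κ : Set α → ℕ} {X Y Z Z' : Set α}

theorem isSep_self_of_disjoint (hd : Disjoint X Y) : IsSep X Y X :=
  ⟨subset_rfl, hd.subset_compl_right⟩

theorem IsSep.inter (hZ : IsSep X Y Z) (hZ' : IsSep X Y Z') : IsSep X Y (Z ∩ Z') :=
  ⟨Set.subset_inter hZ.1 hZ'.1, Set.inter_subset_left.trans hZ.2⟩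

theorem IsSep.union (hZ : IsSep X Y Z) (hZ' : IsSep X Y Z') : IsSep X Y (Z ∪ Z') :=
  ⟨hZ.1.trans Set.subset_union_left, Set.union_subset hZ.2 hZ'.2⟩

theorem IsSep.exists_isMinSep (κ : Set α → ℕ) (hZ : IsSep X Y Z) : ∃ W, IsMinSep κ X Y W := by
  obtain ⟨W, hW, hmin⟩ := (InvImage.wf κ wellFounded_lt).has_min {W | IsSep X Y W} ⟨Z, hZ⟩
  exact ⟨W, hW, fun W' hW' => not_lt.mp (hmin W' hW')⟩

theorem IsMinSep.inter (hκ : Submodular κ) (hZ : IsMinSep κ X Y Z) (hZ' : IsMinSep κ X Y Z') :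
    IsMinSep κ X Y (Z ∩ Z') := by
  refine ⟨hZ.1.inter hZ'.1, fun W hW => ?_⟩
  have hle : κ Z ≤ κ W := hZ.2 W hW
  have heq : κ Z' = κ Z := le_antisymm (hZ'.2 Z hZ.1) (hZ.2 Z' hZ'.1)
  have hunion : κ Z ≤ κ (Z ∪ Z') := hZ.2 _ (hZ.1.union hZ'.1)
  have := hκ Z Z'
  omega

theorem infClosed_setOf_isMinSep (hκ : Submodular κ) : InfClosed {Z | IsMinSep κ X Y Z} :=
  fun _ hZ _ hZ' => hZ.inter hκ hZ'

theorem InfClosed.isLeast_sInf {β : Type*} [CompleteLattice β] {s : Set β} (hs : InfClosed s)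
    (hfin : s.Finite) (hne : s.Nonempty) : IsLeast s (sInf s) :=
  ⟨hs.sInf_mem_of_nonempty hfin hne subset_rfl, fun _ ha => sInf_le ha⟩

end

theorem exists_unique_leftmost_min_sep_general {U : Type*} [Fintype U] (κ : Set U → ℕ)
    (hκ : ConnFn κ) (X Y : Set U) (hd : Disjoint X Y) :
    ∃! Z : Set U, IsMinSep κ X Y Z ∧ ∀ Z' : Set U, IsMinSep κ X Y Z' → Z ⊆ Z' := by
  have hne : {Z | IsMinSep κ X Y Z}.Nonempty := (isSep_self_of_disjoint hd).exists_isMinSep κ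
  obtain ⟨hmem, hlower⟩ := (infClosed_setOf_isMinSep hκ.2.1).isLeast_sInf (Set.toFinite _) hne
  refine ⟨_, ⟨hmem, fun _ hZ' => hlower hZ'⟩, fun W hW => ?_⟩
  exact IsLeast.unique ⟨hW.1, fun _ hZ' => hW.2 _ hZ'⟩ ⟨hmem, hlower⟩

/-- There is a unique leftmost minimum (X,Y)-separation. -/
theorem exists_unique_leftmost_min_sep {U : Type*} [Fintype U] (κ : Set U → ℕ)
    (hκ : ConnFn κ) (X Y : Set U) (hd : Disjoint X Y)
    (hX : X.Nonempty) (hY : Y.Nonempty) :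
    ∃! Z : Set U, IsMinSep κ X Y Z ∧ ∀ Z' : Set U, IsMinSep κ X Y Z' → Z ⊆ Z' :=
  exists_unique_leftmost_min_sep_general κ hκ X Y hd
end

section
/- Let κ be a connectivity function on a finite set U and let 𝒯, 𝒯' be incomparable κ-tangles. Then there is a unique minimum-order (𝒯,𝒯')-separation Z such that Z ⊆ Z' for all minimum-order (𝒯,𝒯')-separations Z'. -/
/-- A κ-tangle of order k (axioms T0–T3). -/
def IsTangle {α : Type*} (κ : Set α → ℕ) (k : ℕ) (T : Set (Set α)) : Prop :=
  (∀ X ∈ T, κ X < k) ∧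
  (∀ X : Set α, κ X < k → X ∈ T ∨ Xᶜ ∈ T) ∧
  (∀ X₁ ∈ T, ∀ X₂ ∈ T, ∀ X₃ ∈ T, (X₁ ∩ X₂ ∩ X₃ : Set α).Nonempty) ∧
  (∀ a : α, {a} ∉ T)

/-- A (𝒯,𝒯')-separation: Z ∈ 𝒯 and Zᶜ ∈ 𝒯'. -/
def IsTSep {α : Type*} (T T' : Set (Set α)) (Z : Set α) : Prop := Z ∈ T ∧ Zᶜ ∈ T'

/-- A minimum-order (𝒯,𝒯')-separation. -/
def IsMinTSep {α : Type*} (κ : Set α → ℕ) (T T' : Set (Set α)) (Z : Set α) : Prop :=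
  IsTSep T T' Z ∧ ∀ Z' : Set α, IsTSep T T' Z' → κ Z ≤ κ Z'

/-- The leftmost minimum (𝒯,𝒯')-separation. -/
def IsLeftMinTSep {α : Type*} (κ : Set α → ℕ) (T T' : Set (Set α)) (Z : Set α) : Prop :=
  IsMinTSep κ T T' Z ∧ ∀ Z' : Set α, IsMinTSep κ T T' Z' → Z ⊆ Z'


private lemma min_inter_tsep {α : Type*} (κ : Set α → ℕ)
    (hκ : ConnFn κ) {k k' : ℕ} {T T' : Set (Set α)}
    (hT : IsTangle κ k T) (hT' : IsTangle κ k' T')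
    {Z Z' : Set α} (hZ : IsMinTSep κ T T' Z) (hZ' : IsMinTSep κ T T' Z') :
    IsMinTSep κ T T' (Z ∩ Z') := by
  obtain ⟨hT0, hT1, hT2, hT3⟩ := hT
  obtain ⟨hT0', hT1', hT2', hT3'⟩ := hT'
  obtain ⟨hsym, hsub, -⟩ := hκ
  obtain ⟨⟨hZT, hZcT'⟩, hZmin⟩ := hZ
  obtain ⟨⟨hZT', hZcT''⟩, hZmin'⟩ := hZ'
  have heq : κ Z' = κ Z := le_antisymm (hZmin' Z ⟨hZT, hZcT'⟩) (hZmin Z' ⟨hZT', hZcT''⟩)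
  have hk : κ Z < k := hT0 Z hZT
  have hk' : κ Z < k' := by have := hT0' Zᶜ hZcT'; rwa [hsym] at this
  have hsubm := hsub Z Z'
  have hunion : κ Z ≤ κ (Z ∪ Z') := by
    by_contra hlt
    push_neg at hlt
    have hUT : Z ∪ Z' ∈ T := by
      rcases hT1 (Z ∪ Z') (hlt.trans hk) with h | h
      · exact h
      · obtain ⟨x, hx⟩ := hT2 Z hZT Z' hZT' _ h
        simp only [Set.mem_inter_iff, Set.mem_compl_iff, Set.mem_union] at hx
        tauto
    have hUcT' : (Z ∪ Z')ᶜ ∈ T' := by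
      have hkU : κ (Z ∪ Z')ᶜ < k' := by rw [hsym]; exact hlt.trans hk'
      rcases hT1' (Z ∪ Z')ᶜ hkU with h | h
      · exact h
      · rw [compl_compl] at h
        obtain ⟨x, hx⟩ := hT2' Zᶜ hZcT' Z'ᶜ hZcT'' _ h
        simp only [Set.mem_inter_iff, Set.mem_compl_iff, Set.mem_union] at hx
        tauto
    exact absurd (hZmin _ ⟨hUT, hUcT'⟩) (not_le.mpr hlt)
  have hinter : κ (Z ∩ Z') ≤ κ Z := by omega
  have hIT : Z ∩ Z' ∈ T := by
    rcases hT1 (Z ∩ Z') (hinter.trans_lt hk) with h | h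
    · exact h
    · obtain ⟨x, hx⟩ := hT2 Z hZT Z' hZT' _ h
      simp only [Set.mem_inter_iff, Set.mem_compl_iff] at hx
      tauto
  have hIcT' : (Z ∩ Z')ᶜ ∈ T' := by
    have hkI : κ (Z ∩ Z')ᶜ < k' := by rw [hsym]; exact hinter.trans_lt hk'
    rcases hT1' (Z ∩ Z')ᶜ hkI with h | h
    · exact h
    · rw [compl_compl] at h
      obtain ⟨x, hx⟩ := hT2' Zᶜ hZcT' Z'ᶜ hZcT'' _ h
      simp only [Set.mem_inter_iff, Set.mem_compl_iff] at hx
      tauto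
  exact ⟨⟨hIT, hIcT'⟩, fun W hW => hinter.trans (hZmin W hW)⟩

/-- There is a unique leftmost minimum (𝒯,𝒯')-separation for incomparable tangles. -/
theorem exists_unique_leftmost_min_tangle_sep {U : Type*} [Fintype U] (κ : Set U → ℕ)
    (hκ : ConnFn κ) {k k' : ℕ} {T T' : Set (Set U)}
    (hT : IsTangle κ k T) (hT' : IsTangle κ k' T')
    (hinc : ¬ T ⊆ T' ∧ ¬ T' ⊆ T) :
    ∃! Z : Set U, IsLeftMinTSep κ T T' Z := by
  -- a separation exists
  have hex : ∃ Z, IsTSep T T' Z := by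
    obtain ⟨hT0, hT1, -, -⟩ := hT
    obtain ⟨hT0', hT1', -, -⟩ := hT'
    obtain ⟨hn1, hn2⟩ := hinc
    rw [Set.not_subset] at hn1 hn2
    obtain ⟨X, hXT, hXnT'⟩ := hn1
    obtain ⟨Y, hYT', hYnT⟩ := hn2
    by_cases h : κ X < k'
    · rcases hT1' X h with h' | h'
      · exact absurd h' hXnT'
      · exact ⟨X, hXT, h'⟩
    · by_cases h2 : κ Y < k
      · rcases hT1 Y h2 with h' | h'
        · exact absurd h' hYnT
        · exact ⟨Yᶜ, h', by rwa [compl_compl]⟩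
      · exfalso
        have h3 := hT0 X hXT
        have h4 := hT0' Y hYT'
        omega
  -- a minimum separation exists
  obtain ⟨Z₀, hZ₀, hZ₀min⟩ :=
    Set.exists_min_image {Z | IsTSep T T' Z} κ (Set.toFinite _) hex
  have hexmin : ∃ Z, IsMinTSep κ T T' Z := ⟨Z₀, hZ₀, hZ₀min⟩
  -- take a minimum separation of minimum cardinality
  obtain ⟨Z, hZ, hZcard⟩ :=
    Set.exists_min_image {Z | IsMinTSep κ T T' Z} (fun Z => Z.ncard) (Set.toFinite _) hexmin
  have hZleft : ∀ Z' : Set U, IsMinTSep κ T T' Z' → Z ⊆ Z' := by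
    intro Z' hZ'
    have hint := min_inter_tsep κ hκ hT hT' hZ hZ'
    have h1 : Z.ncard ≤ (Z ∩ Z').ncard := hZcard _ hint
    have h2 : Z ∩ Z' = Z :=
      Set.eq_of_subset_of_ncard_le Set.inter_subset_left h1 (Set.toFinite _)
    rw [← h2]
    exact Set.inter_subset_right
  refine ⟨Z, ⟨hZ, hZleft⟩, ?_⟩
  rintro W ⟨hWmin, hWleft⟩
  exact subset_antisymm (hWleft Z hZ) (hZleft W hWmin)
end

section
/- Let κ be a connectivity function on a finite set U. For every X ⊆ U there exists Y ⊆ X with |Y| ≤ κ(X) and κ_min(Y, U∖X) = κ(X), where κ_min(A,B) = min{κ(Z) : A ⊆ Z ⊆ U∖B}. (Such a Y is called free in X.) -/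
/-- κ_min(A,B): the minimum of κ(Z) over A ⊆ Z ⊆ Bᶜ. -/
noncomputable def kmin {α : Type*} (κ : Set α → ℕ) (A B : Set α) : ℕ :=
  sInf {n : ℕ | ∃ Z : Set α, A ⊆ Z ∧ Z ⊆ Bᶜ ∧ κ Z = n}

/-- Y is free in X: Y ⊆ X, |Y| ≤ κ(X), and κ_min(Y, Xᶜ) = κ(X). -/
def Free {α : Type*} (κ : Set α → ℕ) (Y X : Set α) : Prop :=
  Y ⊆ X ∧ Y.ncard ≤ κ X ∧ kmin κ Y Xᶜ = κ X

lemma kmin_le_aux {α : Type*} (κ : Set α → ℕ) (Y X Z : Set α) (h1 : Y ⊆ Z) (h2 : Z ⊆ X) :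
    kmin κ Y Xᶜ ≤ κ Z :=
  Nat.sInf_le ⟨Z, h1, by simpa using h2, rfl⟩

lemma kmin_exists_aux {α : Type*} (κ : Set α → ℕ) (Y X : Set α) (h : Y ⊆ X) :
    ∃ Z, Y ⊆ Z ∧ Z ⊆ X ∧ κ Z = kmin κ Y Xᶜ := by
  have hne : {n : ℕ | ∃ Z : Set α, Y ⊆ Z ∧ Z ⊆ Xᶜᶜ ∧ κ Z = n}.Nonempty :=
    ⟨κ X, X, h, by simp, rfl⟩
  obtain ⟨Z, h1, h2, h3⟩ := Nat.sInf_mem hne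
  exact ⟨Z, h1, by simpa using h2, h3⟩

/-- Every set X has a free subset Y. -/
theorem exists_free_subset {U : Type*} [Fintype U] (κ : Set U → ℕ) (hκ : ConnFn κ)
    (X : Set U) : ∃ Y : Set U, Y ⊆ X ∧ Y.ncard ≤ κ X ∧ kmin κ Y Xᶜ = κ X := by
  obtain ⟨-, hsub, -⟩ := hκ
  set f : Set U → ℕ := fun Y => kmin κ Y Xᶜ with hf
  -- f X = κ X
  have hfX : f X = κ X := by
    apply le_antisymm (kmin_le_aux κ X X X subset_rfl subset_rfl)
    obtain ⟨Z, h1, h2, h3⟩ := kmin_exists_aux κ X X subset_rfl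
    rw [← h3, le_antisymm h2 h1]
  -- f is monotone on subsets of X
  have hmono : ∀ Y₁ Y₂ : Set U, Y₁ ⊆ Y₂ → Y₂ ⊆ X → f Y₁ ≤ f Y₂ := by
    intro Y₁ Y₂ h12 h2X
    obtain ⟨Z, h1, h2, h3⟩ := kmin_exists_aux κ Y₂ X h2X
    show kmin κ Y₁ Xᶜ ≤ kmin κ Y₂ Xᶜ
    rw [← h3]
    exact kmin_le_aux κ Y₁ X Z (h12.trans h1) h2
  -- f is submodular on subsets of X
  have hfsub : ∀ Y₁ Y₂ : Set U, Y₁ ⊆ X → Y₂ ⊆ X →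
      f (Y₁ ∩ Y₂) + f (Y₁ ∪ Y₂) ≤ f Y₁ + f Y₂ := by
    intro Y₁ Y₂ h1X h2X
    obtain ⟨Z₁, ha1, hb1, hc1⟩ := kmin_exists_aux κ Y₁ X h1X
    obtain ⟨Z₂, ha2, hb2, hc2⟩ := kmin_exists_aux κ Y₂ X h2X
    have t1 : f (Y₁ ∩ Y₂) ≤ κ (Z₁ ∩ Z₂) :=
      kmin_le_aux κ _ X _ (Set.inter_subset_inter ha1 ha2)
        ((Set.inter_subset_left).trans hb1)
    have t2 : f (Y₁ ∪ Y₂) ≤ κ (Z₁ ∪ Z₂) :=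
      kmin_le_aux κ _ X _ (Set.union_subset_union ha1 ha2) (Set.union_subset hb1 hb2)
    calc f (Y₁ ∩ Y₂) + f (Y₁ ∪ Y₂) ≤ κ (Z₁ ∩ Z₂) + κ (Z₁ ∪ Z₂) := Nat.add_le_add t1 t2
      _ ≤ κ Z₁ + κ Z₂ := hsub Z₁ Z₂
      _ = f Y₁ + f Y₂ := by rw [hc1, hc2]
  -- choose Y of minimum cardinality with f Y = κ X
  set T : Set ℕ := {n | ∃ Y : Set U, Y ⊆ X ∧ f Y = κ X ∧ Y.ncard = n} with hT
  have hTne : T.Nonempty := ⟨X.ncard, X, subset_rfl, hfX, rfl⟩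
  obtain ⟨Y, hYX, hfY, hYcard⟩ := Nat.sInf_mem hTne
  refine ⟨Y, hYX, ?_, hfY⟩
  -- minimality: for y ∈ Y, f (Y \ {y}) < f Y
  have hdrop : ∀ y ∈ Y, f (Y \ {y}) < f Y := by
    intro y hy
    have hle : f (Y \ {y}) ≤ f Y :=
      hmono _ _ Set.diff_subset hYX
    rcases lt_or_eq_of_le hle with h | h
    · exact h
    · exfalso
      have hmem : (Y \ {y}).ncard ∈ T := ⟨Y \ {y}, Set.diff_subset.trans hYX, by rw [h, hfY], rfl⟩
      have hlt : (Y \ {y}).ncard < Y.ncard :=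
        Set.ncard_diff_singleton_lt_of_mem hy Y.toFinite
      have := Nat.sInf_le hmem
      omega
  -- key claim: f S ≥ S.ncard for all S ⊆ Y, by induction on ncard
  have key : ∀ n : ℕ, ∀ S : Set U, S ⊆ Y → S.ncard = n → n ≤ f S := by
    intro n
    induction n with
    | zero => intro S _ _; exact Nat.zero_le _
    | succ k ih =>
      intro S hSY hScard
      have hSne : S.Nonempty := by
        rw [← Set.ncard_pos S.toFinite] at *
        omega
      obtain ⟨y, hyS⟩ := hSne
      have hinter : S ∩ (Y \ {y}) = S \ {y} := by
        ext z; simp only [Set.mem_inter_iff, Set.mem_diff, Set.mem_singleton_iff]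
        exact ⟨fun ⟨h1, _, h3⟩ => ⟨h1, h3⟩, fun ⟨h1, h2⟩ => ⟨h1, hSY h1, h2⟩⟩
      have hunion : S ∪ (Y \ {y}) = Y := by
        apply Set.eq_of_subset_of_subset
        · exact Set.union_subset hSY Set.diff_subset
        · intro z hz
          by_cases hzy : z = y
          · exact Or.inl (hzy ▸ hyS)
          · exact Or.inr ⟨hz, hzy⟩
      have hsm := hfsub S (Y \ {y}) (hSY.trans hYX) (Set.diff_subset.trans hYX)
      rw [hinter, hunion] at hsm
      have h1 : f (Y \ {y}) < f Y := hdrop y (hSY hyS)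
      have h2 : k ≤ f (S \ {y}) := by
        apply ih _ (Set.diff_subset.trans hSY)
        have := Set.ncard_diff_singleton_add_one hyS S.toFinite
        omega
      omega
  have := key Y.ncard Y subset_rfl rfl
  omega
end

section
/- Let κ be a connectivity function on U, let B₁, B₂ ⊆ U be disjoint, and suppose X ⊆ U satisfies: B₁ is free in X and B₂ is free in U∖X. Then κ(X) = κ_min(B₁,B₂). -/
/-- If (B₁,B₂) is a base for X then κ(X) = κ_min(B₁,B₂). -/
theorem base_order {U : Type*} [Fintype U] (κ : Set U → ℕ) (hκ : ConnFn κ)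
    {B₁ B₂ X : Set U} (hd : Disjoint B₁ B₂)
    (h₁ : Free κ B₁ X) (h₂ : Free κ B₂ Xᶜ) :
    κ X = kmin κ B₁ B₂ := by
  obtain ⟨hsym, hsub, -⟩ := hκ
  obtain ⟨hB₁X, -, hk₁⟩ := h₁
  obtain ⟨hB₂X, -, hk₂⟩ := h₂
  have hXmem : κ X ∈ {n : ℕ | ∃ Z : Set U, B₁ ⊆ Z ∧ Z ⊆ B₂ᶜ ∧ κ Z = n} :=
    ⟨X, hB₁X, Set.subset_compl_comm.mp hB₂X, rfl⟩
  apply le_antisymm _ (Nat.sInf_le hXmem)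
  -- pick minimizer Z
  obtain ⟨Z, hB₁Z, hZB₂, hZ⟩ := Nat.sInf_mem ⟨_, hXmem⟩
  rw [← hZ]
  -- κ X ≤ κ (Z ∩ X)
  have h1 : κ X ≤ κ (Z ∩ X) := by
    rw [← hk₁]
    exact Nat.sInf_le ⟨Z ∩ X, Set.subset_inter hB₁Z hB₁X,
      by rw [compl_compl]; exact Set.inter_subset_right, rfl⟩
  -- κ X ≤ κ (Z ∪ X)
  have h2 : κ X ≤ κ (Z ∪ X) := by
    have : κ Xᶜ ≤ κ (Zᶜ ∩ Xᶜ) := by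
      rw [← hk₂]
      refine Nat.sInf_le ⟨Zᶜ ∩ Xᶜ, Set.subset_inter ?_ hB₂X,
        by simp [Set.inter_subset_right], rfl⟩
      exact Set.subset_compl_comm.mp hZB₂
    calc κ X = κ Xᶜ := (hsym X).symm
      _ ≤ κ (Zᶜ ∩ Xᶜ) := this
      _ = κ ((Z ∪ X)ᶜ) := by rw [Set.compl_union]
      _ = κ (Z ∪ X) := hsym _
  have := hsub Z X
  omega
end

section
/- Let κ be a connectivity function on U, and let B₁, B₂ ⊆ U be disjoint. There exists X ⊆ U such that B₁ is free in X and B₂ is free in U∖X if and only if κ_min(B₁,B₂) ≥ max{|B₁|,|B₂|}. -/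
lemma kmin_le {α : Type*} (κ : Set α → ℕ) {A B Z : Set α} (h1 : A ⊆ Z) (h2 : Z ⊆ Bᶜ) :
    kmin κ A B ≤ κ Z :=
  Nat.sInf_le ⟨Z, h1, h2, rfl⟩

/-- (B₁,B₂) is a base for some X iff κ_min(B₁,B₂) ≥ max(|B₁|,|B₂|). -/
theorem base_iff_kmin_ge {U : Type*} [Fintype U] (κ : Set U → ℕ) (hκ : ConnFn κ)
    {B₁ B₂ : Set U} (hd : Disjoint B₁ B₂) :
    (∃ X : Set U, Free κ B₁ X ∧ Free κ B₂ Xᶜ) ↔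
      max B₁.ncard B₂.ncard ≤ kmin κ B₁ B₂ := by
  obtain ⟨hsym, hsub, -⟩ := hκ
  have hB12 : B₁ ⊆ B₂ᶜ := hd.subset_compl_right
  constructor
  · rintro ⟨X, ⟨hB₁X, h1card, h1min⟩, ⟨hB₂X, h2card, h2min⟩⟩
    rw [compl_compl] at h2min
    have hmaxX : max B₁.ncard B₂.ncard ≤ κ X := by
      rw [hsym X] at h2card
      exact max_le h1card h2card
    refine le_csInf ⟨κ B₂ᶜ, B₂ᶜ, hB12, le_refl _, rfl⟩ ?_
    rintro n ⟨Z, hB₁Z, hZB₂, rfl⟩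
    refine hmaxX.trans ?_
    -- κ(Z∩X) ≥ κ X
    have h1 : κ X ≤ κ (Z ∩ X) := by
      rw [← h1min]
      exact kmin_le κ (Set.subset_inter hB₁Z hB₁X) (by rw [compl_compl]; exact Set.inter_subset_right)
    -- κ(Z∪X) ≥ κ Xᶜ = κ X
    have h2 : κ X ≤ κ (Z ∪ X) := by
      rw [← hsym X, ← h2min, ← hsym (Z ∪ X)]
      refine kmin_le κ ?_ ?_
      · rw [Set.compl_union]
        exact Set.subset_inter (Set.subset_compl_comm.mp hZB₂) hB₂X
      · exact Set.compl_subset_compl.mpr Set.subset_union_right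
    have := hsub Z X
    omega
  · intro h
    have hne : {n : ℕ | ∃ Z : Set U, B₁ ⊆ Z ∧ Z ⊆ B₂ᶜ ∧ κ Z = n}.Nonempty :=
      ⟨κ B₂ᶜ, B₂ᶜ, hB12, le_refl _, rfl⟩
    obtain ⟨X, hB₁X, hXB₂, hXval⟩ := Nat.sInf_mem hne
    have hXval : κ X = kmin κ B₁ B₂ := hXval
    have hB₂X : B₂ ⊆ Xᶜ := Set.subset_compl_comm.mp hXB₂
    refine ⟨X, ⟨hB₁X, ?_, ?_⟩, ⟨hB₂X, ?_, ?_⟩⟩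
    · rw [hXval]; exact le_trans (le_max_left _ _) h
    · refine le_antisymm (kmin_le κ hB₁X (by rw [compl_compl])) ?_
      refine le_csInf ⟨κ X, X, hB₁X, by rw [compl_compl], rfl⟩ ?_
      rintro n ⟨W, hB₁W, hWX, rfl⟩
      rw [compl_compl] at hWX
      rw [hXval]
      exact kmin_le κ hB₁W (hWX.trans hXB₂)
    · rw [hsym X, hXval]; exact le_trans (le_max_right _ _) h
    · rw [compl_compl]
      refine le_antisymm (kmin_le κ hB₂X (subset_refl Xᶜ)) ?_
      refine le_csInf ⟨κ Xᶜ, Xᶜ, hB₂X, subset_refl _, rfl⟩ ?_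
      rintro n ⟨W, hB₂W, hWXc, rfl⟩
      rw [hsym X, hXval, ← hsym W]
      exact kmin_le κ (hB₁X.trans (Set.subset_compl_comm.mp hWXc))
        (Set.compl_subset_compl.mpr hB₂W)
end

section
/- Let κ be a connectivity function on U, let B₁, B₂ ⊆ U be disjoint, and let ℒ(B₁,B₂) be the set of all X ⊆ U with B₁ free in X and B₂ free in U∖X. Then ℒ(B₁,B₂) is closed under intersection and union: if X₁, X₂ ∈ ℒ(B₁,B₂) then X₁∩X₂ ∈ ℒ(B₁,B₂) and X₁∪X₂ ∈ ℒ(B₁,B₂). -/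
lemma free_lower {α : Type*} {κ : Set α → ℕ} {Y X Z : Set α} (h : Free κ Y X)
    (h1 : Y ⊆ Z) (h2 : Z ⊆ X) : κ X ≤ κ Z := by
  have : kmin κ Y Xᶜ ≤ κ Z := Nat.sInf_le ⟨Z, h1, by simpa using h2, rfl⟩
  rwa [h.2.2] at this

lemma free_of {α : Type*} {κ : Set α → ℕ} {Y X : Set α} (h1 : Y ⊆ X)
    (h2 : Y.ncard ≤ κ X) (h3 : ∀ Z : Set α, Y ⊆ Z → Z ⊆ X → κ X ≤ κ Z) :
    Free κ Y X := by
  refine ⟨h1, h2, le_antisymm (Nat.sInf_le ⟨X, h1, by simp, rfl⟩) ?_⟩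
  refine le_csInf ⟨κ X, X, h1, by simp, rfl⟩ ?_
  rintro n ⟨Z, a, b, rfl⟩
  exact h3 Z a (by simpa using b)

/-- ℒ(B₁,B₂) is closed under intersection and union. -/
theorem lattice_closed {U : Type*} [Fintype U] (κ : Set U → ℕ) (hκ : ConnFn κ)
    {B₁ B₂ X₁ X₂ : Set U} (hd : Disjoint B₁ B₂)
    (h₁ : Free κ B₁ X₁ ∧ Free κ B₂ X₁ᶜ) (h₂ : Free κ B₁ X₂ ∧ Free κ B₂ X₂ᶜ) :
    (Free κ B₁ (X₁ ∩ X₂) ∧ Free κ B₂ (X₁ ∩ X₂)ᶜ) ∧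
    (Free κ B₁ (X₁ ∪ X₂) ∧ Free κ B₂ (X₁ ∪ X₂)ᶜ) := by
  obtain ⟨hf1, hg1⟩ := h₁
  obtain ⟨hf2, hg2⟩ := h₂
  obtain ⟨hs, hsub, -⟩ := hκ
  have hB1i : B₁ ⊆ X₁ ∩ X₂ := Set.subset_inter hf1.1 hf2.1
  have hB2i : B₂ ⊆ X₁ᶜ ∩ X₂ᶜ := Set.subset_inter hg1.1 hg2.1
  have hB2u : B₂ ⊆ (X₁ ∪ X₂)ᶜ := by rwa [Set.compl_union]
  have a1 : κ X₁ ≤ κ (X₁ ∩ X₂) := free_lower hf1 hB1i Set.inter_subset_left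
  have a2 : κ X₂ ≤ κ (X₁ ∩ X₂) := free_lower hf2 hB1i Set.inter_subset_right
  have b1 : κ X₁ᶜ ≤ κ (X₁ᶜ ∩ X₂ᶜ) := free_lower hg1 hB2i Set.inter_subset_left
  have b2 : κ X₂ᶜ ≤ κ (X₁ᶜ ∩ X₂ᶜ) := free_lower hg2 hB2i Set.inter_subset_right
  have hcu : κ (X₁ᶜ ∩ X₂ᶜ) = κ (X₁ ∪ X₂) := by rw [← Set.compl_union, hs]
  have e1 : κ X₁ᶜ = κ X₁ := hs X₁
  have e2 : κ X₂ᶜ = κ X₂ := hs X₂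
  have sm : κ (X₁ ∩ X₂) + κ (X₁ ∪ X₂) ≤ κ X₁ + κ X₂ := hsub X₁ X₂
  -- all four values are equal
  have ki : κ (X₁ ∩ X₂) = κ X₁ := by omega
  have ku : κ (X₁ ∪ X₂) = κ X₁ := by omega
  have k12 : κ X₂ = κ X₁ := by omega
  constructor
  · constructor
    · -- B₁ free in X₁ ∩ X₂
      refine free_of hB1i (by rw [ki]; exact hf1.2.1) ?_
      intro Z h1 h2
      rw [ki]
      exact free_lower hf1 h1 (h2.trans Set.inter_subset_left)
    · -- B₂ free in (X₁ ∩ X₂)ᶜ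
      have hc : κ (X₁ ∩ X₂)ᶜ = κ X₁ := by rw [hs, ki]
      refine free_of (hg1.1.trans (Set.compl_subset_compl.2 Set.inter_subset_left))
        (by rw [hc, ← e1]; exact hg1.2.1) ?_
      intro Z h1 h2
      rw [hc]
      have s1 : κ X₁ᶜ ≤ κ (Z ∩ X₁ᶜ) :=
        free_lower hg1 (Set.subset_inter h1 hg1.1) Set.inter_subset_right
      have s2 : κ X₁ ≤ κ (Zᶜ ∩ X₁) := by
        refine free_lower hf1 (Set.subset_inter ?_ hf1.1) Set.inter_subset_right
        intro x hx
        exact fun hxZ => h2 hxZ (hB1i hx)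
      have s3 : κ (Z ∪ X₁ᶜ) = κ (Zᶜ ∩ X₁) := by
        rw [← hs (Z ∪ X₁ᶜ), Set.compl_union, compl_compl]
      have sm2 : κ (Z ∩ X₁ᶜ) + κ (Z ∪ X₁ᶜ) ≤ κ Z + κ X₁ᶜ := hsub Z X₁ᶜ
      omega
  · constructor
    · -- B₁ free in X₁ ∪ X₂
      refine free_of (hf1.1.trans Set.subset_union_left) (by rw [ku]; exact hf1.2.1) ?_
      intro Z h1 h2
      rw [ku]
      have s1 : κ X₁ ≤ κ (Z ∩ X₁) :=
        free_lower hf1 (Set.subset_inter h1 hf1.1) Set.inter_subset_right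
      have s2 : κ X₁ᶜ ≤ κ (Zᶜ ∩ X₁ᶜ) := by
        refine free_lower hg1 (Set.subset_inter ?_ hg1.1) Set.inter_subset_right
        intro x hx
        exact fun hxZ => (hB2u hx) (h2 hxZ)
      have s3 : κ (Z ∪ X₁) = κ (Zᶜ ∩ X₁ᶜ) := by
        rw [← hs (Z ∪ X₁), Set.compl_union]
      have sm2 : κ (Z ∩ X₁) + κ (Z ∪ X₁) ≤ κ Z + κ X₁ := hsub Z X₁
      omega
    · -- B₂ free in (X₁ ∪ X₂)ᶜ
      have hc : κ (X₁ ∪ X₂)ᶜ = κ X₁ := by rw [hs, ku]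
      refine free_of hB2u (by rw [hc, ← e1]; exact hg1.2.1) ?_
      intro Z h1 h2
      rw [hc, ← e1]
      refine free_lower hg1 h1 (h2.trans ?_)
      rw [Set.compl_union]
      exact Set.inter_subset_left
end

section
/- Let κ be a connectivity function, 𝒯 a κ-tangle, and B₁,B₂ disjoint subsets of U. If 𝒯 ∩ ℒ(B₁,B₂) is nonempty, then it is closed under intersection; in particular it contains a unique inclusion-wise minimal element. -/
/-- If 𝒯 ∩ ℒ(B₁,B₂) is nonempty, it is closed under intersection and has a unique
inclusion-wise minimal element. -/
theorem tangle_lattice_min {U : Type*} [Fintype U] (κ : Set U → ℕ) (hκ : ConnFn κ)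
    {k : ℕ} {T : Set (Set U)} (hT : IsTangle κ k T)
    {B₁ B₂ : Set U} (hd : Disjoint B₁ B₂)
    (hne : ∃ X, X ∈ T ∧ Free κ B₁ X ∧ Free κ B₂ Xᶜ) :
    (∀ X₁ X₂ : Set U, (X₁ ∈ T ∧ Free κ B₁ X₁ ∧ Free κ B₂ X₁ᶜ) →
        (X₂ ∈ T ∧ Free κ B₁ X₂ ∧ Free κ B₂ X₂ᶜ) →
        (X₁ ∩ X₂ ∈ T ∧ Free κ B₁ (X₁ ∩ X₂) ∧ Free κ B₂ (X₁ ∩ X₂)ᶜ)) ∧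
    (∃! X₀ : Set U, (X₀ ∈ T ∧ Free κ B₁ X₀ ∧ Free κ B₂ X₀ᶜ) ∧
        ∀ X : Set U, (X ∈ T ∧ Free κ B₁ X ∧ Free κ B₂ Xᶜ) → X₀ ⊆ X) := by

  classical
  obtain ⟨hsym, hsub, -⟩ := hκ
  obtain ⟨hTk, hTor, hTtri, -⟩ := hT
  have key : ∀ X₁ X₂ : Set U, (X₁ ∈ T ∧ Free κ B₁ X₁ ∧ Free κ B₂ X₁ᶜ) →
      (X₂ ∈ T ∧ Free κ B₁ X₂ ∧ Free κ B₂ X₂ᶜ) →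
      (X₁ ∩ X₂ ∈ T ∧ Free κ B₁ (X₁ ∩ X₂) ∧ Free κ B₂ (X₁ ∩ X₂)ᶜ) := by
    rintro X₁ X₂ ⟨hX₁T, ⟨hB1X1, hn1, hk1⟩, ⟨hB2X1, hn2, hk2⟩⟩
      ⟨hX₂T, ⟨hB1X2, hn1', hk1'⟩, ⟨hB2X2, hn2', hk2'⟩⟩
    have lb1 : ∀ Z : Set U, B₁ ⊆ Z → Z ⊆ X₁ → κ X₁ ≤ κ Z := by
      intro Z hA hB
      rw [← hk1]
      exact Nat.sInf_le ⟨Z, hA, by rwa [compl_compl], rfl⟩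
    have lb1' : ∀ Z : Set U, B₁ ⊆ Z → Z ⊆ X₂ → κ X₂ ≤ κ Z := by
      intro Z hA hB
      rw [← hk1']
      exact Nat.sInf_le ⟨Z, hA, by rwa [compl_compl], rfl⟩
    have lb2 : ∀ Z : Set U, B₂ ⊆ Z → Z ⊆ X₁ᶜ → κ X₁ᶜ ≤ κ Z := by
      intro Z hA hB
      rw [← hk2]
      exact Nat.sInf_le ⟨Z, hA, by rwa [compl_compl], rfl⟩
    have lb2' : ∀ Z : Set U, B₂ ⊆ Z → Z ⊆ X₂ᶜ → κ X₂ᶜ ≤ κ Z := by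
      intro Z hA hB
      rw [← hk2']
      exact Nat.sInf_le ⟨Z, hA, by rwa [compl_compl], rfl⟩
    have e1 : κ X₁ᶜ = κ X₁ := hsym X₁
    have e2 : κ X₂ᶜ = κ X₂ := hsym X₂
    have h1 : κ X₁ ≤ κ (X₁ ∩ X₂) :=
      lb1 _ (Set.subset_inter hB1X1 hB1X2) Set.inter_subset_left
    have h2 : κ X₂ ≤ κ (X₁ ∩ X₂) :=
      lb1' _ (Set.subset_inter hB1X1 hB1X2) Set.inter_subset_right
    have hB2u : B₂ ⊆ (X₁ ∪ X₂)ᶜ := by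
      rw [Set.compl_union]; exact Set.subset_inter hB2X1 hB2X2
    have h3 : κ X₁ ≤ κ (X₁ ∪ X₂) :=
      calc κ X₁ = κ X₁ᶜ := e1.symm
        _ ≤ κ (X₁ ∪ X₂)ᶜ := lb2 _ hB2u (by rw [Set.compl_union]; exact Set.inter_subset_left)
        _ = κ (X₁ ∪ X₂) := hsym _
    have h4 : κ X₂ ≤ κ (X₁ ∪ X₂) :=
      calc κ X₂ = κ X₂ᶜ := e2.symm
        _ ≤ κ (X₁ ∪ X₂)ᶜ := lb2' _ hB2u (by rw [Set.compl_union]; exact Set.inter_subset_right)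
        _ = κ (X₁ ∪ X₂) := hsym _
    have hsm := hsub X₁ X₂
    have e₀ : κ (X₁ ∩ X₂) = κ X₁ := by omega
    have lbZ : ∀ Z : Set U, B₂ ⊆ Z → Z ⊆ (X₁ ∩ X₂)ᶜ → κ X₁ ≤ κ Z := by
      intro Z hA hB
      have s1 : κ X₁ᶜ ≤ κ (Z ∩ X₁ᶜ) :=
        lb2 _ (Set.subset_inter hA hB2X1) Set.inter_subset_right
      have hB1Zc : B₁ ⊆ Zᶜ := by
        intro a ha haZ
        exact (hB haZ) ⟨hB1X1 ha, hB1X2 ha⟩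
      have s2 : κ X₁ ≤ κ (Z ∪ X₁ᶜ) := by
        have h := lb1 ((Z ∪ X₁ᶜ)ᶜ)
          (by rw [Set.compl_union, compl_compl]; exact Set.subset_inter hB1Zc hB1X1)
          (by rw [Set.compl_union, compl_compl]; exact Set.inter_subset_right)
        rwa [hsym] at h
      have := hsub Z X₁ᶜ
      omega
    have hkcap : κ (X₁ ∩ X₂) < k := by have := hTk X₁ hX₁T; omega
    have hmem : X₁ ∩ X₂ ∈ T := by
      rcases hTor _ hkcap with h | h
      · exact h
      · exfalso
        obtain ⟨a, ha⟩ := hTtri X₁ hX₁T X₂ hX₂T _ h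
        exact ha.2 ⟨ha.1.1, ha.1.2⟩
    have hB1cap : B₁ ⊆ X₁ ∩ X₂ := Set.subset_inter hB1X1 hB1X2
    have hB2capc : B₂ ⊆ (X₁ ∩ X₂)ᶜ := fun a ha h => hB2X1 ha h.1
    have ec : κ (X₁ ∩ X₂)ᶜ = κ (X₁ ∩ X₂) := hsym _
    refine ⟨hmem, ⟨hB1cap, by omega, ?_⟩, hB2capc, by omega, ?_⟩
    · apply le_antisymm
      · exact Nat.sInf_le ⟨X₁ ∩ X₂, hB1cap, by rw [compl_compl], rfl⟩
      · refine le_csInf ⟨κ (X₁ ∩ X₂), X₁ ∩ X₂, hB1cap, by rw [compl_compl], rfl⟩ ?_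
        rintro n ⟨Z, hA, hB, rfl⟩
        rw [compl_compl] at hB
        calc κ (X₁ ∩ X₂) = κ X₁ := e₀
          _ ≤ κ Z := lb1 Z hA (hB.trans Set.inter_subset_left)
    · apply le_antisymm
      · exact Nat.sInf_le ⟨(X₁ ∩ X₂)ᶜ, hB2capc, by rw [compl_compl], rfl⟩
      · refine le_csInf ⟨κ (X₁ ∩ X₂)ᶜ, (X₁ ∩ X₂)ᶜ, hB2capc, by rw [compl_compl], rfl⟩ ?_
        rintro n ⟨Z, hA, hB, rfl⟩
        rw [compl_compl] at hB
        calc κ (X₁ ∩ X₂)ᶜ = κ X₁ := by omega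
          _ ≤ κ Z := lbZ Z hA hB
  refine ⟨key, ?_⟩
  obtain ⟨X₀, hX₀, hmin⟩ :=
    Set.exists_min_image {X : Set U | X ∈ T ∧ Free κ B₁ X ∧ Free κ B₂ Xᶜ}
      Set.ncard (Set.toFinite _) hne
  have hsub0 : ∀ X : Set U, (X ∈ T ∧ Free κ B₁ X ∧ Free κ B₂ Xᶜ) → X₀ ⊆ X := by
    intro X hX
    have hcap := key X₀ X hX₀ hX
    have heq : X₀ ∩ X = X₀ :=
      Set.eq_of_subset_of_ncard_le Set.inter_subset_left (hmin _ hcap)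
    rw [← heq]
    exact Set.inter_subset_right
  refine ⟨X₀, ⟨hX₀, hsub0⟩, ?_⟩
  rintro Y ⟨hY, hYmin⟩
  exact Set.Subset.antisymm (hYmin X₀ hX₀) (hsub0 Y hY)
end

section
/- Let U be a finite set and 𝒩 ⊆ 2^U a nested family closed under complementation (for all X,Y ∈ 𝒩, X ⊆ Y or X ⊆ U∖Y or U∖X ⊆ Y or U∖X ⊆ U∖Y; and U∖X ∈ 𝒩 whenever X ∈ 𝒩). Then there exists a tree decomposition (T, β) of U, i.e., a tree T and β : V(T) → 2^U with the sets β(t) pairwise disjoint and their union equal to U, such that 𝒩 = {β̃(s,t) : st ∈ E(T)}, where β̃(s,t) is the union of β(t') over all nodes t' in the component of T − st containing t. -/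
/-- The union of the bags over the connected component of `t` in `T` minus edge `st`
(i.e. the set β̃(s,t) of a tree decomposition). -/
def tset {V U : Type*} (T : SimpleGraph V) (β : V → Set U) (a b : V) : Set U :=
  ⋃ x ∈ {x : V | (T.deleteEdges {s(a, b)}).Reachable b x}, β x

/-!
Assume first that `∅, univ ∉ N`. The tree is built on the consistent orientations of `N`
(a choice of one of `X, Xᶜ` for each `X ∈ N`, closed under supersets in `N`), and the bag of an
orientation `O` is the set of points `u` with `{Z ∈ N | u ∈ Z} = O`. For each `X ∈ N` exactly
one edge flips `X` to `Xᶜ`, namely `towards N X — towards N Xᶜ`; every other edge keeps the side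
of `X`, while two orientations on the same side are joined by flipping minimal elements of their
difference one at a time. Hence the tree minus that edge has the orientations containing `X` and
those containing `Xᶜ` as its two components, and the side containing `towards N Xᶜ` carries `Xᶜ`.
Degenerate members `∅, univ` are removed by adding one point to `U` and pulling back; for
`U = ∅` the family is `∅` or `{∅}`, displayed by one vertex or one edge.
-/

open Set SimpleGraph

namespace NestedFamily

section TreeDecomp

variable {V V' U U' : Type*}

structure TreeDecompDisplays (T : SimpleGraph V) (β : V → Set U) (N : Set (Set U)) : Prop where
  isTree : T.IsTree
  pairwise_disjoint : Pairwise fun a b => Disjoint (β a) (β b)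
  iUnion_eq_univ : ⋃ v, β v = univ
  eq_setOf_tset : N = {Z | ∃ a b, T.Adj a b ∧ Z = tset T β a b}

theorem tset_preimage (T : SimpleGraph V) (β : V → Set U') (f : U → U') (a b : V) :
    tset T (fun v => f ⁻¹' β v) a b = f ⁻¹' tset T β a b := by
  simp only [tset, preimage_iUnion₂]

theorem TreeDecompDisplays.comap {T : SimpleGraph V} {β : V → Set U'} {N : Set (Set U')}
    (h : TreeDecompDisplays T β N) (f : U → U') :
    TreeDecompDisplays T (fun v => f ⁻¹' β v) ((f ⁻¹' ·) '' N) where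
  isTree := h.isTree
  pairwise_disjoint := h.pairwise_disjoint.mono fun _ _ hab => hab.preimage f
  iUnion_eq_univ := by rw [← preimage_iUnion, h.iUnion_eq_univ, preimage_univ]
  eq_setOf_tset := by
    ext Z
    simp [h.eq_setOf_tset, tset_preimage, eq_comm]

def _root_.SimpleGraph.Iso.deleteEdgesSingleton {T : SimpleGraph V} {T' : SimpleGraph V'}
    (φ : T ≃g T') (a b : V) : T.deleteEdges {s(a, b)} ≃g T'.deleteEdges {s(φ a, φ b)} where
  toEquiv := φ.toEquiv
  map_rel_iff' := by simp [φ.map_adj_iff]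

theorem tset_iso {T : SimpleGraph V} {T' : SimpleGraph V'} (φ : T ≃g T') (β : V → Set U)
    (a b : V) : tset T' (β ∘ φ.symm) (φ a) (φ b) = tset T β a b := by
  ext u
  have hR (x : V) : (T'.deleteEdges {s(φ a, φ b)}).Reachable (φ b) (φ x) ↔
      (T.deleteEdges {s(a, b)}).Reachable b x :=
    Iso.reachable_iff (φ := φ.deleteEdgesSingleton a b)
  simp only [tset, mem_iUnion₂, mem_ofPred_eq, exists_prop, φ.surjective.exists, hR,
    Function.comp_apply, RelIso.symm_apply_apply]

theorem TreeDecompDisplays.iso {T : SimpleGraph V} {T' : SimpleGraph V'} {β : V → Set U}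
    {N : Set (Set U)} (h : TreeDecompDisplays T β N) (φ : T ≃g T') :
    TreeDecompDisplays T' (β ∘ φ.symm) N where
  isTree := φ.isTree_iff.1 h.isTree
  pairwise_disjoint _ _ hab := h.pairwise_disjoint (φ.symm.injective.ne hab)
  iUnion_eq_univ := by rw [← h.iUnion_eq_univ]; exact φ.symm.surjective.iUnion_comp β
  eq_setOf_tset := by
    rw [h.eq_setOf_tset]
    ext Z
    constructor
    · rintro ⟨a, b, hab, rfl⟩
      exact ⟨φ a, φ b, φ.map_adj_iff.2 hab, (tset_iso φ β a b).symm⟩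
    · rintro ⟨a, b, hab, rfl⟩
      refine ⟨φ.symm a, φ.symm b, φ.symm.map_adj_iff.2 hab, ?_⟩
      rw [← tset_iso φ, φ.apply_symm_apply, φ.apply_symm_apply]

theorem TreeDecompDisplays.exists_fin [Finite V] {T : SimpleGraph V} {β : V → Set U}
    {N : Set (Set U)} (h : TreeDecompDisplays T β N) :
    ∃ (W : Type) (_ : Fintype W) (T' : SimpleGraph W) (β' : W → Set U),
      TreeDecompDisplays T' β' N :=
  ⟨_, inferInstance, _, _, h.iso (Iso.map (Finite.equivFin V) T)⟩

end TreeDecomp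

section Nested

variable {U : Type*} {X Y : Set U}

def Nested (X Y : Set U) : Prop := X ⊆ Y ∨ X ⊆ Yᶜ ∨ Xᶜ ⊆ Y ∨ Xᶜ ⊆ Yᶜ

structure IsProperNestedFamily (N : Set (Set U)) : Prop where
  nested : ∀ X ∈ N, ∀ Y ∈ N, Nested X Y
  compl_mem : ∀ X ∈ N, Xᶜ ∈ N
  empty_notMem : ∅ ∉ N
  univ_notMem : univ ∉ N

theorem Nested.symm (h : Nested X Y) : Nested Y X := by
  rcases h with h | h | h | h
  · exact Or.inr (Or.inr (Or.inr (compl_subset_compl.2 h)))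
  · exact Or.inr (Or.inl (subset_compl_comm.1 h))
  · exact Or.inr (Or.inr (Or.inl (compl_subset_comm.1 h)))
  · exact Or.inl (compl_subset_compl.1 h)

theorem nested_compl_left : Nested Xᶜ Y ↔ Nested X Y := by
  simp only [Nested, compl_compl]
  tauto

theorem nested_compl_right : Nested X Yᶜ ↔ Nested X Y := by
  simp only [Nested, compl_compl]
  tauto

theorem nested_singleton (a : U) (Y : Set U) : Nested {a} Y := by
  by_cases ha : a ∈ Y
  · exact Or.inl (singleton_subset_iff.2 ha)
  · exact Or.inr (Or.inl (singleton_subset_iff.2 ha))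

end Nested

section Orientation

variable {U : Type*}

structure IsOrientation (N O : Set (Set U)) : Prop where
  subset : O ⊆ N
  compl_notMem : ∀ X ∈ O, Xᶜ ∉ O
  mem_or_compl_mem : ∀ X ∈ N, X ∈ O ∨ Xᶜ ∈ O
  mem_of_subset : ∀ A ∈ O, ∀ Z ∈ N, A ⊆ Z → Z ∈ O

variable {N O O' : Set (Set U)} {X Y : Set U}

theorem IsOrientation.eq_of_subset (hO : IsOrientation N O) (hO' : IsOrientation N O')
    (h : O ⊆ O') : O = O' :=
  h.antisymm fun Z hZ => (hO.mem_or_compl_mem Z (hO'.subset hZ)).resolve_right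
    fun hZc => hO'.compl_notMem Z hZ (h hZc)

def principal (N : Set (Set U)) (u : U) : Set (Set U) := {Z ∈ N | u ∈ Z}

theorem isOrientation_principal (hc : ∀ X ∈ N, Xᶜ ∈ N) (u : U) :
    IsOrientation N (principal N u) where
  subset _ hZ := hZ.1
  compl_notMem _ hZ hZc := hZc.2 hZ.2
  mem_or_compl_mem Z hZ := (em (u ∈ Z)).imp (⟨hZ, ·⟩) (⟨hc Z hZ, ·⟩)
  mem_of_subset _ hA _ hZ hAZ := ⟨hZ, hAZ hA.2⟩

/-- The orientation in which `X` is minimal; flipping `X` to `Xᶜ` in it gives `towards N Xᶜ`. -/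
def towards (N : Set (Set U)) (X : Set U) : Set (Set U) := {Z ∈ N | X ⊆ Z ∨ Xᶜ ⊂ Z}

theorem mem_towards (hX : X ∈ N) : X ∈ towards N X := ⟨hX, Or.inl subset_rfl⟩

theorem notMem_towards_compl (h1 : univ ∉ N) (X : Set U) : X ∉ towards N Xᶜ := by
  rintro ⟨hX, h | h⟩
  · exact h1 (eq_univ_of_forall (fun x => by_contra fun hx => hx (h hx)) ▸ hX)
  · exact (compl_compl X ▸ h).ne rfl

theorem eq_of_mem_towards_of_notMem_towards_compl (h : X ∈ towards N Y)
    (h' : X ∉ towards N Yᶜ) : X = Y := by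
  rw [towards, mem_sep_iff] at h h'
  rw [compl_compl] at h'
  obtain ⟨hX, hYX | hYX⟩ := h
  · exact (LE.le.eq_of_not_ssubset hYX fun hlt => h' ⟨hX, Or.inr hlt⟩).symm
  · exact absurd ⟨hX, Or.inl hYX.subset⟩ h'

theorem mem_towards_compl_iff_of_ne (hXY : X ≠ Y) (hXYc : X ≠ Yᶜ) :
    X ∈ towards N Yᶜ ↔ X ∈ towards N Y := by
  refine ⟨fun h => by_contra fun h' => hXYc ?_, fun h => by_contra fun h' => hXY ?_⟩
  · exact eq_of_mem_towards_of_notMem_towards_compl h (by rwa [compl_compl])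
  · exact eq_of_mem_towards_of_notMem_towards_compl h h'

theorem isOrientation_towards (hN : IsProperNestedFamily N) (hX : X ∈ N) :
    IsOrientation N (towards N X) where
  subset _ hZ := hZ.1
  compl_notMem Z := by
    rintro ⟨-, hZ | hZ⟩ ⟨-, hZc | hZc⟩
    · exact hN.empty_notMem (subset_empty_iff.1 (fun x hx => hZc hx (hZ hx)) ▸ hX)
    · exact (compl_lt_compl_iff_lt.1 hZc).not_subset hZ
    · exact hZ.not_subset (subset_compl_comm.1 hZc)
    · refine hN.univ_notMem (compl_empty_iff.1 (subset_empty_iff.1 ?_) ▸ hX)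
      exact fun x hx => hZc.subset hx (hZ.subset hx)
  mem_or_compl_mem Z hZ := by
    have hZc := hN.compl_mem Z hZ
    rcases hN.nested X hX Z hZ with h | h | h | h
    · exact Or.inl ⟨hZ, Or.inl h⟩
    · exact Or.inr ⟨hZc, Or.inl h⟩
    · obtain rfl | h := LE.le.eq_or_ssubset h
      · exact Or.inr ⟨hZc, Or.inl (compl_compl X).ge⟩
      · exact Or.inl ⟨hZ, Or.inr h⟩
    · obtain h | h := LE.le.eq_or_ssubset h
      · exact Or.inl ⟨hZ, Or.inl (compl_injective h).le⟩
      · exact Or.inr ⟨hZc, Or.inr h⟩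
  mem_of_subset _ hA _ hZ hAZ :=
    ⟨hZ, hA.2.imp (·.trans hAZ) (·.trans_subset hAZ)⟩

theorem IsOrientation.not_subset_compl (hc : ∀ X ∈ N, Xᶜ ∈ N) (hO : IsOrientation N O)
    {A B : Set U} (hA : A ∈ O) (hB : B ∈ O) : ¬ A ⊆ Bᶜ := fun h =>
  hO.compl_notMem B hB (hO.mem_of_subset A hA Bᶜ (hc B (hO.subset hB)) h)

theorem IsOrientation.eq_towards (hN : IsProperNestedFamily N) (hO : IsOrientation N O)
    (hX : X ∈ O) (hmin : ∀ A ∈ O, A ⊆ X → A = X) : O = towards N X := by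
  refine ((isOrientation_towards hN (hO.subset hX)).eq_of_subset hO ?_).symm
  rintro Z ⟨hZ, hXZ | hXZ⟩
  · exact hO.mem_of_subset X hX Z hZ hXZ
  · refine (hO.mem_or_compl_mem Z hZ).resolve_right fun hZc => hXZ.ne ?_
    rw [← hmin Zᶜ hZc (compl_subset_comm.1 hXZ.subset), compl_compl]

theorem IsOrientation.exists_eq_towards [Finite U] (hN : IsProperNestedFamily N)
    (hO : IsOrientation N O) (hO' : IsOrientation N O') (hne : (O \ O').Nonempty) :
    ∃ Y ∈ O \ O', O = towards N Y := by
  obtain ⟨Y, hY, hmin⟩ := (toFinite _).exists_minimal hne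
  refine ⟨Y, hY, hO.eq_towards hN hY.1 fun A hA hAY => ?_⟩
  have hA' : A ∉ O' := fun hA' => hO'.not_subset_compl hN.compl_mem hA'
    ((hO'.mem_or_compl_mem Y (hO.subset hY.1)).resolve_left hY.2) (by rwa [compl_compl])
  exact hAY.antisymm (hmin ⟨hA, hA'⟩ hAY)

end Orientation

section OrientationTree

variable {U : Type*} {N : Set (Set U)} {X : Set U}

abbrev Orientation (N : Set (Set U)) : Type _ := {O : Set (Set U) // IsOrientation N O}

def orientationTree (N : Set (Set U)) : SimpleGraph (Orientation N) :=
  fromRel fun a b => ∃ X ∈ N, a.1 = towards N X ∧ b.1 = towards N Xᶜ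

def bag (N : Set (Set U)) (O : Orientation N) : Set U := {u | principal N u = O.1}

theorem orientationTree_adj (hN : IsProperNestedFamily N) {a b : Orientation N} :
    (orientationTree N).Adj a b ↔ ∃ X ∈ N, a.1 = towards N X ∧ b.1 = towards N Xᶜ := by
  refine ⟨fun ⟨_, h⟩ => h.elim id ?_, fun ⟨X, hX, ha, hb⟩ => ⟨?_, .inl ⟨X, hX, ha, hb⟩⟩⟩
  · rintro ⟨X, hX, hb, ha⟩
    exact ⟨Xᶜ, hN.compl_mem X hX, ha, by rw [compl_compl, hb]⟩
  · rintro rfl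
    exact notMem_towards_compl hN.univ_notMem X (hb ▸ ha ▸ mem_towards hX)

variable {c d : Orientation N}

theorem eq_of_adj_of_mem_of_notMem (hN : IsProperNestedFamily N) (hcX : c.1 = towards N X)
    (hdX : d.1 = towards N Xᶜ) {x y : Orientation N} (hxy : (orientationTree N).Adj x y)
    (hx : X ∈ x.1) (hy : X ∉ y.1) : x = c ∧ y = d := by
  obtain ⟨Y, -, hxY, hyY⟩ := (orientationTree_adj hN).1 hxy
  obtain rfl := eq_of_mem_towards_of_notMem_towards_compl (hxY ▸ hx) (hyY ▸ hy)
  exact ⟨Subtype.ext (hxY.trans hcX.symm), Subtype.ext (hyY.trans hdX.symm)⟩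

theorem mem_iff_of_reachable_deleteEdges (hN : IsProperNestedFamily N)
    (hcX : c.1 = towards N X) (hdX : d.1 = towards N Xᶜ) {a b : Orientation N}
    (h : ((orientationTree N).deleteEdges {s(c, d)}).Reachable a b) : X ∈ a.1 ↔ X ∈ b.1 := by
  obtain ⟨w⟩ := h
  induction w with
  | nil => rfl
  | cons hxy _ ih =>
    rw [deleteEdges_adj, mem_singleton_iff] at hxy
    refine Iff.trans ⟨fun hx => by_contra fun hy => ?_, fun hy => by_contra fun hx => ?_⟩ ih
    · obtain ⟨rfl, rfl⟩ := eq_of_adj_of_mem_of_notMem hN hcX hdX hxy.1 hx hy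
      exact hxy.2 rfl
    · obtain ⟨rfl, rfl⟩ := eq_of_adj_of_mem_of_notMem hN hcX hdX hxy.1.symm hy hx
      exact hxy.2 Sym2.eq_swap

theorem reachable_deleteEdges_of_mem_iff [Finite U] (hN : IsProperNestedFamily N)
    (hX : X ∈ N) (hcX : c.1 = towards N X) (hdX : d.1 = towards N Xᶜ) (a b : Orientation N)
    (hab : X ∈ a.1 ↔ X ∈ b.1) : ((orientationTree N).deleteEdges {s(c, d)}).Reachable a b := by
  induction hn : (a.1 \ b.1).ncard using Nat.strong_induction_on generalizing a with
  | _ n ih =>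
  rcases (a.1 \ b.1).eq_empty_or_nonempty with h | h
  · rw [Subtype.ext (a.2.eq_of_subset b.2 (sdiff_eq_empty.1 h))]
  obtain ⟨Y, ⟨hYa, hYb⟩, ha⟩ := a.2.exists_eq_towards hN b.2 h
  have hY := a.2.subset hYa
  have hYcb : Yᶜ ∈ b.1 := (b.2.mem_or_compl_mem Y hY).resolve_left hYb
  have hXY : X ≠ Y := by rintro rfl; exact hYb (hab.1 hYa)
  have hXYc : X ≠ Yᶜ := by rintro rfl; exact a.2.compl_notMem Y hYa (hab.2 hYcb)
  let a' : Orientation N := ⟨towards N Yᶜ, isOrientation_towards hN (hN.compl_mem Y hY)⟩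
  have ha' : X ∈ a'.1 ↔ X ∈ a.1 := ha ▸ mem_towards_compl_iff_of_ne hXY hXYc
  have hsub : a'.1 \ b.1 ⊆ (a.1 \ b.1) \ {Y} := by
    rintro Z ⟨hZa', hZb⟩
    have hZY : Z ≠ Y := by rintro rfl; exact notMem_towards_compl hN.univ_notMem Z hZa'
    have hZYc : Z ≠ Yᶜ := by rintro rfl; exact hZb hYcb
    exact ⟨⟨ha ▸ (mem_towards_compl_iff_of_ne hZY hZYc).1 hZa', hZb⟩, hZY⟩
  have hXc : X ∈ c.1 := hcX ▸ mem_towards hX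
  have hXd : X ∉ d.1 := hdX ▸ notMem_towards_compl hN.univ_notMem X
  have hadj : ((orientationTree N).deleteEdges {s(c, d)}).Adj a a' := by
    refine deleteEdges_adj.2 ⟨(orientationTree_adj hN).2 ⟨Y, hY, ha, rfl⟩, ?_⟩
    rw [mem_singleton_iff, Sym2.eq_iff]
    rintro (⟨rfl, rfl⟩ | ⟨rfl, rfl⟩)
    · exact hXd (ha'.2 hXc)
    · exact hXd (ha'.1 hXc)
  have hlt : (a'.1 \ b.1).ncard < n :=
    hn ▸ (ncard_le_ncard hsub).trans_lt (ncard_sdiff_singleton_lt_of_mem ⟨hYa, hYb⟩)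
  exact hadj.reachable.trans (ih _ hlt a' (ha'.trans hab) rfl)

theorem tset_orientationTree [Finite U] (hN : IsProperNestedFamily N) (hX : X ∈ N)
    (hcX : c.1 = towards N X) (hdX : d.1 = towards N Xᶜ) :
    tset (orientationTree N) (bag N) c d = Xᶜ := by
  have hXd : X ∉ d.1 := hdX ▸ notMem_towards_compl hN.univ_notMem X
  ext u
  simp only [tset, bag, mem_iUnion₂, mem_ofPred_eq, exists_prop, mem_compl_iff]
  constructor
  · rintro ⟨x, hdx, hux⟩ huX
    exact hXd ((mem_iff_of_reachable_deleteEdges hN hcX hdX hdx).2 (hux ▸ ⟨hX, huX⟩))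
  · intro huX
    refine ⟨⟨principal N u, isOrientation_principal hN.compl_mem u⟩, ?_, rfl⟩
    exact reachable_deleteEdges_of_mem_iff hN hX hcX hdX _ _ (iff_of_false hXd (huX ·.2))

theorem isTree_orientationTree [Finite U] (hN : IsProperNestedFamily N) :
    (orientationTree N).IsTree := by
  have : Nonempty (Orientation N) := by
    rcases N.eq_empty_or_nonempty with rfl | ⟨X, hX⟩
    · exact ⟨⟨∅, by constructor <;> simp⟩⟩
    · exact ⟨⟨towards N X, isOrientation_towards hN hX⟩⟩
  refine ⟨⟨fun a b => ?_⟩, isAcyclic_iff_forall_adj_isBridge.2 fun x y hxy => ?_⟩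
  · rcases (a.1 \ b.1).eq_empty_or_nonempty with h | ⟨Y, hYa, hYb⟩
    · rw [Subtype.ext (a.2.eq_of_subset b.2 (sdiff_eq_empty.1 h))]
    have hY := a.2.subset hYa
    let c : Orientation N := ⟨towards N Y, isOrientation_towards hN hY⟩
    let d : Orientation N := ⟨towards N Yᶜ, isOrientation_towards hN (hN.compl_mem Y hY)⟩
    have hac := reachable_deleteEdges_of_mem_iff hN hY (c := c) (d := d) rfl rfl a c
      (iff_of_true hYa (mem_towards hY))
    have hdb := reachable_deleteEdges_of_mem_iff hN hY (c := c) (d := d) rfl rfl d b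
      (iff_of_false (notMem_towards_compl hN.univ_notMem Y) hYb)
    have hcd : (orientationTree N).Adj c d := (orientationTree_adj hN).2 ⟨Y, hY, rfl, rfl⟩
    exact (hac.mono (deleteEdges_le _)).trans (hcd.reachable.trans (hdb.mono (deleteEdges_le _)))
  · obtain ⟨Y, hY, hx, hy⟩ := (orientationTree_adj hN).1 hxy
    refine isBridge_iff.2 fun h => notMem_towards_compl hN.univ_notMem Y ?_
    exact hy ▸ (mem_iff_of_reachable_deleteEdges hN hx hy h).1 (hx ▸ mem_towards hY)

theorem treeDecompDisplays_orientationTree [Finite U] (hN : IsProperNestedFamily N) :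
    TreeDecompDisplays (orientationTree N) (bag N) N where
  isTree := isTree_orientationTree hN
  pairwise_disjoint _ _ hab :=
    disjoint_left.2 fun _ hua hub => hab (Subtype.ext (hua.symm.trans hub))
  iUnion_eq_univ := eq_univ_of_forall fun u =>
    mem_iUnion.2 ⟨⟨principal N u, isOrientation_principal hN.compl_mem u⟩, rfl⟩
  eq_setOf_tset := by
    ext X
    constructor
    · intro hX
      have hXc := hN.compl_mem X hX
      refine ⟨⟨towards N Xᶜ, isOrientation_towards hN hXc⟩,
        ⟨towards N X, isOrientation_towards hN hX⟩,
        (orientationTree_adj hN).2 ⟨Xᶜ, hXc, rfl, by rw [compl_compl]⟩, ?_⟩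
      rw [tset_orientationTree hN hXc rfl (by rw [compl_compl]), compl_compl]
    · rintro ⟨a, b, hab, rfl⟩
      obtain ⟨Y, hY, ha, hb⟩ := (orientationTree_adj hN).1 hab
      rw [tset_orientationTree hN hY ha hb]
      exact hN.compl_mem Y hY

end OrientationTree

section Lift

variable {U : Type*} (u₀ : U) {X Y : Set U}

/-- Lifts `X` to `Option U`, adding the new point `none` when `X` lies on the side of `u₀` or
`X = ∅`, but not when `X = univ`: complements are preserved, and no lift is `∅` or `univ`. -/
def liftSet (X : Set U) : Set (Option U) := {y | y.elim (X = ∅ ∨ X ≠ univ ∧ u₀ ∈ X) (· ∈ X)}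

theorem preimage_some_liftSet (X : Set U) : some ⁻¹' liftSet u₀ X = X := rfl

theorem liftSet_compl (X : Set U) : liftSet u₀ Xᶜ = (liftSet u₀ X)ᶜ := by
  have : Nonempty U := ⟨u₀⟩
  ext (_ | x)
  · rcases eq_or_ne X ∅ with rfl | h0
    · simp [liftSet]
    rcases eq_or_ne X univ with rfl | h1
    · simp [liftSet]
    simp [liftSet, h0, h1, compl_empty_iff, compl_univ_iff]
  · rfl

theorem liftSet_empty : liftSet u₀ ∅ = {none} := by
  ext (_ | x) <;> simp [liftSet]

theorem liftSet_univ : liftSet u₀ univ = {none}ᶜ := by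
  rw [← compl_empty, liftSet_compl, liftSet_empty]

theorem liftSet_mono (hX : X ≠ ∅) (hY : Y ≠ univ) (h : X ⊆ Y) : liftSet u₀ X ⊆ liftSet u₀ Y := by
  rintro (_ | x) hx
  · exact Or.inr ⟨hY, h ((hx.resolve_left hX).2)⟩
  · exact h hx

theorem liftSet_nonempty (X : Set U) : (liftSet u₀ X).Nonempty := by
  rcases X.eq_empty_or_nonempty with rfl | ⟨x, hx⟩
  · exact ⟨none, Or.inl rfl⟩
  · exact ⟨some x, hx⟩

theorem nested_liftSet_of_subset (h : X ⊆ Y) : Nested (liftSet u₀ X) (liftSet u₀ Y) := by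
  rcases eq_or_ne X ∅ with rfl | hX
  · rw [liftSet_empty]; exact nested_singleton _ _
  rcases eq_or_ne Y univ with rfl | hY
  · rw [liftSet_univ, nested_compl_right]; exact (nested_singleton _ _).symm
  exact Or.inl (liftSet_mono u₀ hX hY h)

theorem nested_liftSet (h : Nested X Y) : Nested (liftSet u₀ X) (liftSet u₀ Y) := by
  rcases h with h | h | h | h
  · exact nested_liftSet_of_subset u₀ h
  · simpa only [liftSet_compl, nested_compl_right] using nested_liftSet_of_subset u₀ h
  · simpa only [liftSet_compl, nested_compl_left] using nested_liftSet_of_subset u₀ h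
  · simpa only [liftSet_compl, nested_compl_left, nested_compl_right] using
      nested_liftSet_of_subset u₀ h

theorem isProperNestedFamily_image_liftSet {N : Set (Set U)}
    (hnest : ∀ X ∈ N, ∀ Y ∈ N, Nested X Y) (hc : ∀ X ∈ N, Xᶜ ∈ N) :
    IsProperNestedFamily (liftSet u₀ '' N) where
  nested := by
    rintro _ ⟨X, hX, rfl⟩ _ ⟨Y, hY, rfl⟩
    exact nested_liftSet u₀ (hnest X hX Y hY)
  compl_mem := by
    rintro _ ⟨X, hX, rfl⟩
    exact ⟨Xᶜ, hc X hX, liftSet_compl u₀ X⟩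
  empty_notMem := fun ⟨X, _, h⟩ => (liftSet_nonempty u₀ X).ne_empty h
  univ_notMem := fun ⟨X, _, h⟩ => (liftSet_nonempty u₀ Xᶜ).ne_empty
    (by rw [liftSet_compl, h, compl_univ])

end Lift

theorem isTree_top_fin_two : (⊤ : SimpleGraph (Fin 2)).IsTree := by
  rw [isTree_iff_connected_and_card]
  refine ⟨connected_top, ?_⟩
  rw [Nat.card_eq_fintype_card, ← edgeFinset_card, card_edgeFinset_top_eq_card_choose_two]
  simp

theorem exists_treeDecompDisplays_of_isEmpty {U : Type*} [IsEmpty U] (N : Set (Set U)) :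
    ∃ (V : Type) (_ : Fintype V) (T : SimpleGraph V) (β : V → Set U),
      TreeDecompDisplays T β N := by
  have hN : N = ∅ ∨ N = {∅} := subset_singleton_iff_eq.1 fun X _ => Subsingleton.elim X ∅
  rcases hN with rfl | rfl
  · refine ⟨Fin 1, inferInstance, ⊥, fun _ => ∅, .of_subsingleton, fun _ _ _ => disjoint_empty _,
      Subsingleton.elim _ _, ?_⟩
    simp
  · refine ⟨Fin 2, inferInstance, ⊤, fun _ => ∅, isTree_top_fin_two, fun _ _ _ => disjoint_empty _,
      Subsingleton.elim _ _, ?_⟩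
    ext Z
    simp only [mem_singleton_iff, mem_ofPred_eq, top_adj]
    exact ⟨fun _ => ⟨0, 1, by decide, Subsingleton.elim _ _⟩, fun _ => Subsingleton.elim _ _⟩

end NestedFamily

open NestedFamily

/-- Every nested, complementation-closed family of separations is the set of
separations of a tree decomposition. -/
theorem nested_family_tree_decomposition {U : Type*} [Fintype U] (N : Set (Set U))
    (hnest : ∀ X ∈ N, ∀ Y ∈ N, X ⊆ Y ∨ X ⊆ Yᶜ ∨ Xᶜ ⊆ Y ∨ Xᶜ ⊆ Yᶜ)
    (hcompl : ∀ X ∈ N, Xᶜ ∈ N) :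
    ∃ (V : Type) (_ : Fintype V) (T : SimpleGraph V) (β : V → Set U),
      T.IsTree ∧
      (Pairwise fun a b : V => Disjoint (β a) (β b)) ∧
      (⋃ v : V, β v) = Set.univ ∧
      N = {Z : Set U | ∃ a b : V, T.Adj a b ∧ Z = tset T β a b} := by
  suffices ∃ (V : Type) (_ : Fintype V) (T : SimpleGraph V) (β : V → Set U),
      TreeDecompDisplays T β N by
    obtain ⟨V, hV, T, β, h⟩ := this
    exact ⟨V, hV, T, β, h.isTree, h.pairwise_disjoint, h.iUnion_eq_univ, h.eq_setOf_tset⟩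
  rcases isEmpty_or_nonempty U with hU | ⟨⟨u₀⟩⟩
  · exact exists_treeDecompDisplays_of_isEmpty N
  have hN := isProperNestedFamily_image_liftSet u₀ hnest hcompl
  have hpre : (some ⁻¹' ·) '' (liftSet u₀ '' N) = N := by
    simp only [image_image, preimage_some_liftSet, image_id']
  exact hpre ▸ ((treeDecompDisplays_orientationTree hN).comap some).exists_fin
end

section
/- Let κ be a connectivity function on U and let X ⊆ U be such that X is a minimum-order (𝒯,𝒯')-separation for some κ-tangles 𝒯,𝒯'. Then for every Y ⊆ U, either κ(X∩Y) ≤ κ(Y) or κ(X∖Y) ≤ κ(Y). -/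
/-- For a minimum tangle–tangle separation X and every Y,
either κ(X∩Y) ≤ κ(Y) or κ(X∖Y) ≤ κ(Y). -/
theorem min_tangle_sep_intersection {U : Type*} [Fintype U] (κ : Set U → ℕ)
    (hκ : ConnFn κ) {X : Set U}
    (hX : ∃ (k k' : ℕ) (T T' : Set (Set U)),
      IsTangle κ k T ∧ IsTangle κ k' T' ∧ IsMinTSep κ T T' X) :
    ∀ Y : Set U, κ (X ∩ Y) ≤ κ Y ∨ κ (X \ Y) ≤ κ Y := by
  obtain ⟨k, k', T, T', ⟨hT1, hT2, hT3, _⟩, ⟨hT1', hT2', hT3', _⟩, ⟨⟨hXT, hXT'⟩, hmin⟩⟩ := hX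
  obtain ⟨hsym, hsub, -⟩ := hκ
  intro Y
  by_contra hc
  push_neg at hc
  obtain ⟨h1, h2⟩ := hc
  -- submodularity consequences
  have e1 := hsub X Y
  have e2 := hsub X Yᶜ
  rw [← Set.diff_eq] at e2
  rw [hsym Y] at e2
  have hU1 : κ (X ∪ Y) < κ X := by omega
  have hU2 : κ (X ∪ Yᶜ) < κ X := by omega
  have hXk : κ X < k := hT1 X hXT
  have hXk' : κ X < k' := by rw [← hsym X]; exact hT1' Xᶜ hXT'
  -- X ∪ Y ∈ T
  have hmemT : ∀ Z : Set U, X ⊆ Z → κ Z < κ X → Z ∈ T := by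
    intro Z hXZ hZ
    rcases hT2 Z (by omega) with h | h
    · exact h
    · exfalso
      obtain ⟨a, ha⟩ := hT3 X hXT X hXT Zᶜ h
      exact ha.2 (hXZ ha.1.1)
  have hUY : X ∪ Y ∈ T := hmemT _ Set.subset_union_left hU1
  have hUY' : X ∪ Yᶜ ∈ T := hmemT _ Set.subset_union_left hU2
  -- (X∪Y)ᶜ ∉ T' and (X∪Yᶜ)ᶜ ∉ T' by minimality
  have hnot : ∀ Z : Set U, Z ∈ T → κ Z < κ X → Zᶜ ∉ T' := by
    intro Z hZT hZ hZT'
    have := hmin Z ⟨hZT, hZT'⟩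
    omega
  have h1' : X ∪ Y ∈ T' := by
    rcases hT2' (X ∪ Y) (by omega) with h | h
    · exact h
    · exact absurd h (hnot _ hUY hU1)
  have h2' : X ∪ Yᶜ ∈ T' := by
    rcases hT2' (X ∪ Yᶜ) (by omega) with h | h
    · exact h
    · exact absurd h (hnot _ hUY' hU2)
  obtain ⟨a, ha⟩ := hT3' (X ∪ Y) h1' (X ∪ Yᶜ) h2' Xᶜ hXT'
  simp only [Set.mem_inter_iff, Set.mem_union, Set.mem_compl_iff] at ha
  tauto
end

section
/- Let 𝔗 be a coherent family of κ-tangles of order k+1 (all members have the same truncation to order k), let 𝒵(𝔗) be the set of leftmost minimum (𝒯,𝒯')-separations over all incomparable pairs 𝒯,𝒯' ∈ 𝔗, and let Z₀ ∈ 𝒵(𝔗) be inclusion-wise minimal. Then for every Z ∈ 𝒵(𝔗), either Z₀ ⊆ Z or Z₀ ⊆ U∖Z. -/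
section Aux
variable {U : Type*}

lemma tangle_not_mem_of_disjoint {κ : Set U → ℕ} {k : ℕ} {T : Set (Set U)}
    (hT : IsTangle κ k T) {X Y : Set U} (hX : X ∈ T) (hXY : X ∩ Y = ∅) : Y ∉ T := by
  intro hY
  obtain ⟨a, ha⟩ := hT.2.2.1 X hX Y hY Y hY
  have : a ∈ X ∩ Y := ha.1
  rw [hXY] at this
  exact this

lemma tangle_compl_mem_of_disjoint {κ : Set U → ℕ} {k : ℕ} {T : Set (Set U)}
    (hT : IsTangle κ k T) {X Y : Set U} (hX : X ∈ T) (hκY : κ Y < k)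
    (hXY : X ∩ Y = ∅) : Yᶜ ∈ T :=
  (hT.2.1 Y hκY).resolve_left (tangle_not_mem_of_disjoint hT hX hXY)

lemma tangle_inter_mem {κ : Set U → ℕ} {k : ℕ} {T : Set (Set U)}
    (hT : IsTangle κ k T) {X Y : Set U} (hX : X ∈ T) (hY : Y ∈ T)
    (hκ : κ (X ∩ Y) < k) : X ∩ Y ∈ T := by
  rcases hT.2.1 _ hκ with h | h
  · exact h
  · exfalso
    obtain ⟨a, ha⟩ := hT.2.2.1 X hX Y hY _ h
    exact ha.2 ha.1

end Aux

lemma exists_leftmost {U : Type*} [Fintype U] {κ : Set U → ℕ} (hsub : Submodular κ)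
    {k : ℕ} {T T' : Set (Set U)} (hT : IsTangle κ (k + 1) T) (hT' : IsTangle κ (k + 1) T')
    {Z : Set U} (hZ : IsTSep T T' Z) : ∃ W, IsLeftMinTSep κ T T' W := by
  classical
  have hOrdne : (κ Z) ∈ {n | ∃ Z', IsTSep T T' Z' ∧ κ Z' = n} := ⟨Z, hZ, rfl⟩
  obtain ⟨Z₁, hZ₁, hZ₁m⟩ := Nat.sInf_mem (Set.nonempty_of_mem hOrdne)
  have hmin1 : IsMinTSep κ T T' Z₁ :=
    ⟨hZ₁, fun Z' hZ' => hZ₁m ▸ Nat.sInf_le ⟨Z', hZ', rfl⟩⟩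
  -- minimum separations are closed under intersection
  have hclose : ∀ A B : Set U, IsMinTSep κ T T' A → IsMinTSep κ T T' B →
      IsMinTSep κ T T' (A ∩ B) := by
    intro A B hA hB
    have hordA : κ A < k + 1 := hT.1 A hA.1.1
    have hub : κ A ≤ κ (A ∪ B) := by
      by_contra h
      push_neg at h
      have hsep : IsTSep T T' (A ∪ B) := by
        constructor
        · rcases hT.2.1 (A ∪ B) (lt_trans h hordA) with hh | hh
          · exact hh
          · exact absurd hh (tangle_not_mem_of_disjoint hT hA.1.1
              (by ext x; simp; tauto))
        · rcases hT'.2.1 (A ∪ B) (lt_trans h hordA) with hh | hh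
          · exfalso
            obtain ⟨a, ha⟩ := hT'.2.2.1 _ hh Aᶜ hA.1.2 Bᶜ hB.1.2
            obtain ⟨⟨hab, hna⟩, hnb⟩ := ha
            rcases hab with h1 | h1
            · exact hna h1
            · exact hnb h1
          · exact hh
      exact absurd (hA.2 _ hsep) (by omega)
    have hBA : κ B = κ A := le_antisymm (hB.2 A hA.1) (hA.2 B hB.1)
    have hAB : κ (A ∩ B) ≤ κ A := by have := hsub A B; omega
    have hABk : κ (A ∩ B) < k + 1 := lt_of_le_of_lt hAB hordA
    refine ⟨⟨tangle_inter_mem hT hA.1.1 hB.1.1 hABk, ?_⟩,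
      fun Z' h => le_trans hAB (hA.2 Z' h)⟩
    exact tangle_compl_mem_of_disjoint hT' hA.1.2 hABk (by ext x; simp; tauto)
  -- pick a minimum separation of smallest cardinality
  have hCrdne : Z₁.ncard ∈ {n | ∃ W, IsMinTSep κ T T' W ∧ W.ncard = n} := ⟨Z₁, hmin1, rfl⟩
  obtain ⟨W, hWM, hWc⟩ := Nat.sInf_mem (Set.nonempty_of_mem hCrdne)
  refine ⟨W, hWM, fun Z' hZ' => ?_⟩
  have h1 : IsMinTSep κ T T' (W ∩ Z') := hclose W Z' hWM hZ'
  have h2 : W.ncard ≤ (W ∩ Z').ncard := hWc ▸ Nat.sInf_le ⟨W ∩ Z', h1, rfl⟩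
  have hEq : W ∩ Z' = W :=
    Set.eq_of_subset_of_ncard_le Set.inter_subset_left h2 (Set.toFinite W)
  intro x hx
  have : x ∈ W ∩ Z' := hEq.symm ▸ hx
  exact this.2

lemma corner_case {U : Type*} {κ : Set U → ℕ} (hsym : SymmetricFn κ) (hsub : Submodular κ)
    {k : ℕ} {𝔗 : Set (Set (Set U))}
    (htang : ∀ T ∈ 𝔗, IsTangle κ (k + 1) T)
    (hcoh : ∀ T ∈ 𝔗, ∀ T' ∈ 𝔗, {X ∈ T | κ X < k} = {X ∈ T' | κ X < k})
    {T₁ T₂ T T' : Set (Set U)}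
    (h1 : T₁ ∈ 𝔗) (h2 : T₂ ∈ 𝔗) (h3 : T ∈ 𝔗) (h4 : T' ∈ 𝔗)
    {A C : Set U} (hA : IsLeftMinTSep κ T₁ T₂ A)
    (hCT : C ∈ T) (hCT' : Cᶜ ∈ T') (hCk : κ C = k)
    (hAC : κ (A ∩ C) < k) : A ⊆ Cᶜ := by
  have tg1 := htang T₁ h1
  have tg2 := htang T₂ h2
  have tgT := htang T h3
  have hco : ∀ S ∈ 𝔗, ∀ S' ∈ 𝔗, ∀ X ∈ S, κ X < k → X ∈ S' := by
    intro S hS S' hS' X hX hκX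
    have h := hcoh S hS S' hS'
    have : X ∈ {X ∈ S' | κ X < k} := h ▸ (⟨hX, hκX⟩ : X ∈ {X ∈ S | κ X < k})
    exact this.1
  have hAT₁ : A ∈ T₁ := hA.1.1.1
  have hAcT₂ : Aᶜ ∈ T₂ := hA.1.1.2
  have hAk : κ A = k := by
    have hlt : κ A < k + 1 := tg1.1 A hAT₁
    have hge : k ≤ κ A := by
      by_contra h
      push_neg at h
      have hAT₂ : A ∈ T₂ := hco T₁ h1 T₂ h2 A hAT₁ h
      exact tangle_not_mem_of_disjoint tg2 hAcT₂ (by ext x; simp) hAT₂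
    omega
  -- (A ∩ C)ᶜ is in every tangle of the family
  have hX2 : (A ∩ C)ᶜ ∈ T₂ :=
    tangle_compl_mem_of_disjoint tg2 hAcT₂ (by omega) (by ext x; simp; tauto)
  have hX2κ : κ (A ∩ C)ᶜ < k := by rw [hsym]; exact hAC
  have hX2T : (A ∩ C)ᶜ ∈ T := hco T₂ h2 T h3 _ hX2 hX2κ
  have hX2T₁ : (A ∩ C)ᶜ ∈ T₁ := hco T₂ h2 T₁ h1 _ hX2 hX2κ
  -- κ (A ∪ Cᶜ) ≥ k
  have hκeq : κ (Aᶜ ∩ C) = κ (A ∪ Cᶜ) := by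
    have := hsym (A ∪ Cᶜ)
    rwa [Set.compl_union, compl_compl] at this
  have hub : k ≤ κ (A ∪ Cᶜ) := by
    by_contra h
    push_neg at h
    have e1 : κ (Aᶜ ∩ C) < k := by omega
    have hmem : (Aᶜ ∩ C)ᶜ ∈ T₁ :=
      tangle_compl_mem_of_disjoint tg1 hAT₁ (by omega) (by ext x; simp; tauto)
    rw [Set.compl_inter, compl_compl] at hmem
    have hmemT : A ∪ Cᶜ ∈ T := hco T₁ h1 T h3 _ hmem (by omega)
    obtain ⟨a, ha⟩ := tgT.2.2.1 C hCT _ hmemT _ hX2T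
    obtain ⟨⟨ha1, ha2⟩, ha3⟩ := ha
    simp only [Set.mem_union, Set.mem_compl_iff, Set.mem_inter_iff] at ha1 ha2 ha3
    tauto
  -- κ (A ∩ Cᶜ) ≤ k
  have hlow : κ (A ∩ Cᶜ) ≤ k := by
    have := hsub A Cᶜ
    have hCc : κ Cᶜ = k := by rw [hsym]; exact hCk
    omega
  -- A ∩ Cᶜ ∈ T₁
  have hm1 : A ∩ Cᶜ ∈ T₁ := by
    rcases tg1.2.1 (A ∩ Cᶜ) (by omega) with h | h
    · exact h
    · exfalso
      obtain ⟨a, ha⟩ := tg1.2.2.1 A hAT₁ _ hX2T₁ _ h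
      obtain ⟨⟨ha1, ha2⟩, ha3⟩ := ha
      simp only [Set.mem_compl_iff, Set.mem_inter_iff] at ha1 ha2 ha3
      tauto
  -- (A ∩ Cᶜ)ᶜ ∈ T₂
  have hm2 : (A ∩ Cᶜ)ᶜ ∈ T₂ :=
    tangle_compl_mem_of_disjoint tg2 hAcT₂ (by omega) (by ext x; simp; tauto)
  have hminsep : IsMinTSep κ T₁ T₂ (A ∩ Cᶜ) :=
    ⟨⟨hm1, hm2⟩, fun Z' hZ' => le_trans (by omega) (hA.1.2 Z' hZ')⟩
  have hsubA := hA.2 _ hminsep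
  exact fun x hx => (hsubA hx).2

/-- In a coherent family of tangles of order k+1, an inclusion-wise minimal leftmost
minimum separation is nested with every leftmost minimum separation. -/
theorem coherent_leftmost_nested {U : Type*} [Fintype U] (κ : Set U → ℕ)
    (hκ : ConnFn κ) {k : ℕ} (𝔗 : Set (Set (Set U)))
    (htang : ∀ T ∈ 𝔗, IsTangle κ (k + 1) T)
    (hcoh : ∀ T ∈ 𝔗, ∀ T' ∈ 𝔗, {X ∈ T | κ X < k} = {X ∈ T' | κ X < k})
    (Z₀ : Set U)
    (hZ₀ : Z₀ ∈ {Z : Set U | ∃ T ∈ 𝔗, ∃ T' ∈ 𝔗,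
        (¬ T ⊆ T' ∧ ¬ T' ⊆ T) ∧ IsLeftMinTSep κ T T' Z})
    (hmin : ∀ Z ∈ {Z : Set U | ∃ T ∈ 𝔗, ∃ T' ∈ 𝔗,
        (¬ T ⊆ T' ∧ ¬ T' ⊆ T) ∧ IsLeftMinTSep κ T T' Z}, Z ⊆ Z₀ → Z = Z₀) :
    ∀ Z ∈ {Z : Set U | ∃ T ∈ 𝔗, ∃ T' ∈ 𝔗,
        (¬ T ⊆ T' ∧ ¬ T' ⊆ T) ∧ IsLeftMinTSep κ T T' Z},
      Z₀ ⊆ Z ∨ Z₀ ⊆ Zᶜ := by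
  obtain ⟨hsym, hsub, -⟩ := hκ
  have hco : ∀ S ∈ 𝔗, ∀ S' ∈ 𝔗, ∀ X ∈ S, κ X < k → X ∈ S' := by
    intro S hS S' hS' X hX hκX
    have h := hcoh S hS S' hS'
    have : X ∈ {X ∈ S' | κ X < k} := h ▸ (⟨hX, hκX⟩ : X ∈ {X ∈ S | κ X < k})
    exact this.1
  -- every separation between coherent tangles has order exactly k
  have horder : ∀ S ∈ 𝔗, ∀ S' ∈ 𝔗, ∀ X : Set U, X ∈ S → Xᶜ ∈ S' → κ X = k := by
    intro S hS S' hS' X hX hXc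
    have hlt : κ X < k + 1 := (htang S hS).1 X hX
    have hge : k ≤ κ X := by
      by_contra h
      push_neg at h
      have hX' : X ∈ S' := hco S hS S' hS' X hX h
      exact tangle_not_mem_of_disjoint (htang S' hS') hXc (by ext x; simp) hX'
    omega
  intro C hC
  obtain ⟨T, hT, T', hT', ⟨hi1, hi2⟩, hCl⟩ := hC
  obtain ⟨T₁, hT₁, T₂, hT₂, ⟨hj1, hj2⟩, hAl⟩ := hZ₀
  set A := Z₀ with hAdef
  have tg1 := htang T₁ hT₁
  have tg2 := htang T₂ hT₂
  have tgT := htang T hT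
  have tgT' := htang T' hT'
  have hAT₁ : A ∈ T₁ := hAl.1.1.1
  have hAcT₂ : Aᶜ ∈ T₂ := hAl.1.1.2
  have hCT : C ∈ T := hCl.1.1.1
  have hCcT' : Cᶜ ∈ T' := hCl.1.1.2
  have hAk : κ A = k := horder T₁ hT₁ T₂ hT₂ A hAT₁ hAcT₂
  have hCk : κ C = k := horder T hT T' hT' C hCT hCcT'
  by_cases hc1 : κ (A ∩ C) < k
  · exact Or.inr (corner_case hsym hsub htang hcoh hT₁ hT₂ hT hT' hAl hCT hCcT' hCk hc1)
  by_cases hc2 : κ (A ∩ Cᶜ) < k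
  · left
    have hCcc : Cᶜᶜ ∈ T := by rw [compl_compl]; exact hCT
    have hCck : κ Cᶜ = k := by rw [hsym]; exact hCk
    have := corner_case hsym hsub htang hcoh hT₁ hT₂ hT' hT hAl hCcT' hCcc hCck hc2
    rwa [compl_compl] at this
  push_neg at hc1 hc2
  -- order facts for the corners on the other side
  have hκ1 : κ (Aᶜ ∩ Cᶜ) = κ (A ∪ C) := by
    have := hsym (A ∪ C); rwa [Set.compl_union] at this
  have hκ2 : κ (Aᶜ ∩ C) = κ (A ∪ Cᶜ) := by
    have := hsym (A ∪ Cᶜ); rwa [Set.compl_union, compl_compl] at this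
  have hu1 : κ (Aᶜ ∩ Cᶜ) ≤ k := by have := hsub A C; omega
  have hu2 : κ (Aᶜ ∩ C) ≤ k := by
    have := hsub A Cᶜ
    have hCck : κ Cᶜ = k := by rw [hsym]; exact hCk
    omega
  rcases tgT.2.1 A (by omega) with hAT | hAcT
  · -- A ∈ T
    rcases tgT'.2.1 A (by omega) with hAT' | hAcT'
    · -- A ∈ T' as well: re-anchor A as leftmost separation of a new pair, using hmin
      rcases tg2.2.1 C (by omega) with hCT₂ | hCcT₂
      · -- C ∈ T₂ : use pair (T', T₂)
        right
        have hsepA : IsTSep T' T₂ A := ⟨hAT', hAcT₂⟩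
        have hinc1 : ¬ T' ⊆ T₂ := fun hs =>
          tangle_not_mem_of_disjoint tg2 hAcT₂ (by ext x; simp) (hs hAT')
        have hinc2 : ¬ T₂ ⊆ T' := fun hs =>
          tangle_not_mem_of_disjoint tgT' hAT' (by ext x; simp) (hs hAcT₂)
        obtain ⟨W, hW⟩ := exists_leftmost hsub tgT' tg2 hsepA
        have hAmin : IsMinTSep κ T' T₂ A := ⟨hsepA, fun Z' hZ' => by
          rw [hAk, ← horder T' hT' T₂ hT₂ Z' hZ'.1 hZ'.2]⟩
        have hWA : W ⊆ A := hW.2 A hAmin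
        have hWZ : W = A := hmin W ⟨T', hT', T₂, hT₂, ⟨hinc1, hinc2⟩, hW⟩ hWA
        rw [← hWZ]
        refine hW.2 Cᶜ ⟨⟨hCcT', by rw [compl_compl]; exact hCT₂⟩, fun Z' hZ' => by
          rw [show κ Cᶜ = k from by rw [hsym]; exact hCk,
            ← horder T' hT' T₂ hT₂ Z' hZ'.1 hZ'.2]⟩
      · -- Cᶜ ∈ T₂ : use pair (T, T₂)
        left
        have hsepA : IsTSep T T₂ A := ⟨hAT, hAcT₂⟩
        have hinc1 : ¬ T ⊆ T₂ := fun hs =>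
          tangle_not_mem_of_disjoint tg2 hAcT₂ (by ext x; simp) (hs hAT)
        have hinc2 : ¬ T₂ ⊆ T := fun hs =>
          tangle_not_mem_of_disjoint tgT hAT (by ext x; simp) (hs hAcT₂)
        obtain ⟨W, hW⟩ := exists_leftmost hsub tgT tg2 hsepA
        have hAmin : IsMinTSep κ T T₂ A := ⟨hsepA, fun Z' hZ' => by
          rw [hAk, ← horder T hT T₂ hT₂ Z' hZ'.1 hZ'.2]⟩
        have hWA : W ⊆ A := hW.2 A hAmin
        have hWZ : W = A := hmin W ⟨T, hT, T₂, hT₂, ⟨hinc1, hinc2⟩, hW⟩ hWA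
        rw [← hWZ]
        exact hW.2 C ⟨⟨hCT, hCcT₂⟩, fun Z' hZ' => by
          rw [hCk, ← horder T hT T₂ hT₂ Z' hZ'.1 hZ'.2]⟩
    · -- Aᶜ ∈ T' : A itself is a minimum (T,T')-separation, so C ⊆ A, so C = A by hmin
      left
      have hAmin : IsMinTSep κ T T' A := ⟨⟨hAT, hAcT'⟩, fun Z' hZ' => by
        rw [hAk, ← horder T hT T' hT' Z' hZ'.1 hZ'.2]⟩
      have hCA : C ⊆ A := hCl.2 A hAmin
      have : C = A := hmin C ⟨T, hT, T', hT', ⟨hi1, hi2⟩, hCl⟩ hCA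
      rw [this]
  · -- Aᶜ ∈ T : then Aᶜ ∩ C is a minimum (T,T')-separation, so C ⊆ Aᶜ ∩ C, so A ⊆ Cᶜ
    right
    have hmem : Aᶜ ∩ C ∈ T := tangle_inter_mem tgT hAcT hCT (by omega)
    have hmem2 : (Aᶜ ∩ C)ᶜ ∈ T' :=
      tangle_compl_mem_of_disjoint tgT' hCcT' (by omega) (by ext x; simp; tauto)
    have hms : IsMinTSep κ T T' (Aᶜ ∩ C) := ⟨⟨hmem, hmem2⟩, fun Z' hZ' => by
      calc κ (Aᶜ ∩ C) ≤ k := hu2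
        _ = κ Z' := (horder T hT T' hT' Z' hZ'.1 hZ'.2).symm⟩
    have hsubC := hCl.2 _ hms
    intro x hx hxC
    exact (hsubC hxC).1 hx
end

section
/- Let 𝔗 be a coherent family of κ-tangles of order k+1. Then for any two distinct 𝒯, 𝒯' ∈ 𝔗, the tangles 𝒯 and 𝒯' are incomparable, and every minimum (𝒯,𝒯')-separation has order exactly k. -/
lemma tangle_aux {U : Type*} (κ : Set U → ℕ) (hsym : SymmetricFn κ) {k : ℕ}
    {T T' : Set (Set U)} (ht : IsTangle κ (k + 1) T) (ht' : IsTangle κ (k + 1) T')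
    (hco : {X ∈ T | κ X < k} = {X ∈ T' | κ X < k})
    {X : Set U} (hX : X ∈ T) (hX' : X ∉ T') : Xᶜ ∈ T' ∧ Xᶜ ∉ T ∧ κ X = k := by
  obtain ⟨h1, h2, h3, h4⟩ := ht
  obtain ⟨h1', h2', h3', h4'⟩ := ht'
  have hk : ¬ κ X < k := fun h => hX' (by
    have : X ∈ {X ∈ T' | κ X < k} := hco ▸ ⟨hX, h⟩
    exact this.1)
  have hXk : κ X = k := le_antisymm (Nat.lt_succ_iff.mp (h1 X hX)) (not_lt.mp hk)
  have hc : Xᶜ ∈ T' := (h2' X (h1 X hX)).resolve_left hX'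
  refine ⟨hc, fun hcT => ?_, hXk⟩
  have := h3 X hX X hX Xᶜ hcT
  simp at this

/-- Distinct members of a coherent family of tangles of order k+1 are incomparable,
and every minimum separation between them has order exactly k. -/
theorem coherent_distinct_incomparable {U : Type*} [Fintype U] (κ : Set U → ℕ)
    (hκ : ConnFn κ) {k : ℕ} (𝔗 : Set (Set (Set U)))
    (htang : ∀ T ∈ 𝔗, IsTangle κ (k + 1) T)
    (hcoh : ∀ T ∈ 𝔗, ∀ T' ∈ 𝔗, {X ∈ T | κ X < k} = {X ∈ T' | κ X < k})
    {T T' : Set (Set U)} (hT : T ∈ 𝔗) (hT' : T' ∈ 𝔗) (hne : T ≠ T') :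
    (¬ T ⊆ T' ∧ ¬ T' ⊆ T) ∧ ∀ Z : Set U, IsMinTSep κ T T' Z → κ Z = k := by
  obtain ⟨hsym, -, -⟩ := hκ
  have ht := htang T hT
  have ht' := htang T' hT'
  have hco := hcoh T hT T' hT'
  have hco' := hcoh T' hT' T hT
  -- a witness in the symmetric difference
  have hex : ∃ X : Set U, X ∈ T ∧ X ∉ T' ∧ Xᶜ ∈ T' ∧ Xᶜ ∉ T ∧ κ X = k := by
    have : ¬ ∀ X, X ∈ T ↔ X ∈ T' := fun h => hne (Set.ext h)
    push_neg at this
    obtain ⟨X, hX⟩ := this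
    rcases hX with ⟨h, h'⟩ | ⟨h, h'⟩
    · exact ⟨X, h, h', tangle_aux κ hsym ht ht' hco h h'⟩
    · obtain ⟨hc1, hc2, hk⟩ := tangle_aux κ hsym ht' ht hco' h' h
      refine ⟨Xᶜ, hc1, hc2, ?_, ?_, ?_⟩
      · simpa using h'
      · simpa using h
      · rw [hsym X, hk]
  obtain ⟨X, hXT, hXnT', hcT', hcnT, hXk⟩ := hex
  constructor
  · exact ⟨fun hsub => hXnT' (hsub hXT), fun hsub => hcnT (hsub hcT')⟩
  · intro Z ⟨⟨hZT, hZcT'⟩, hmin⟩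
    have hle : κ Z ≤ k := hXk ▸ hmin X ⟨hXT, hcT'⟩
    refine le_antisymm hle (not_lt.mp fun hlt => ?_)
    have hZT' : Z ∈ T' := by
      have : Z ∈ {X ∈ T' | κ X < k} := hco ▸ ⟨hZT, hlt⟩
      exact this.1
    have := ht'.2.2.1 Z hZT' Z hZT' Zᶜ hZcT'
    simp at this
end

section
/- Let κ be a connectivity function on U and 𝒯, 𝒯' κ-tangles. There exists a (𝒯,𝒯')-separation (a set Z with Z ∈ 𝒯 and U∖Z ∈ 𝒯') if and only if 𝒯 and 𝒯' are incomparable (neither 𝒯 ⊆ 𝒯' nor 𝒯' ⊆ 𝒯). -/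
/-- A (𝒯,𝒯')-separation exists iff 𝒯 and 𝒯' are incomparable. -/
theorem tangle_sep_iff_incomparable {U : Type*} [Fintype U] (κ : Set U → ℕ)
    (hκ : ConnFn κ) {k k' : ℕ} {T T' : Set (Set U)}
    (hT : IsTangle κ k T) (hT' : IsTangle κ k' T') :
    (∃ Z : Set U, Z ∈ T ∧ Zᶜ ∈ T') ↔ (¬ T ⊆ T' ∧ ¬ T' ⊆ T) := by
  obtain ⟨hTk, hTc, hTi, -⟩ := hT
  obtain ⟨hTk', hTc', hTi', -⟩ := hT'
  constructor
  · rintro ⟨Z, hZ, hZc⟩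
    constructor
    · intro hsub
      obtain ⟨x, hx⟩ := hTi' Z (hsub hZ) Zᶜ hZc Z (hsub hZ)
      exact hx.1.2 hx.1.1
    · intro hsub
      obtain ⟨x, hx⟩ := hTi Z hZ Zᶜ (hsub hZc) Z hZ
      exact hx.1.2 hx.1.1
  · rintro ⟨h1, h2⟩
    rcases le_or_gt k k' with hkk | hkk
    · obtain ⟨X, hX, hX'⟩ := Set.not_subset.mp h1
      refine ⟨X, hX, ?_⟩
      rcases hTc' X (lt_of_lt_of_le (hTk X hX) hkk) with h | h
      · exact absurd h hX'
      · exact h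
    · obtain ⟨Y, hY, hY'⟩ := Set.not_subset.mp h2
      refine ⟨Yᶜ, ?_, by rwa [compl_compl]⟩
      rcases hTc Y (lt_trans (hTk' Y hY) hkk) with h | h
      · exact absurd h hY'
      · exact h
end

section
/- Let κ be a connectivity function on U, 𝒯 a κ-tangle, and X ⊆ U. If there exists a (𝒯,X)-separation (a set Z ∈ 𝒯 with Z ⊆ U∖X), then there exists a unique leftmost minimum (𝒯,X)-separation: a minimum-order (𝒯,X)-separation contained in every minimum-order (𝒯,X)-separation. -/
/-- If a (𝒯,X)-separation exists, there is a unique leftmost minimum (𝒯,X)-separation. -/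
theorem exists_unique_leftmost_min_tangle_set_sep {U : Type*} [Fintype U]
    (κ : Set U → ℕ) (hκ : ConnFn κ) {k : ℕ} {T : Set (Set U)} (hT : IsTangle κ k T)
    (X : Set U) (hex : ∃ Z : Set U, Z ∈ T ∧ Z ⊆ Xᶜ) :
    ∃! Z : Set U, (Z ∈ T ∧ Z ⊆ Xᶜ ∧ ∀ Z' : Set U, Z' ∈ T → Z' ⊆ Xᶜ → κ Z ≤ κ Z') ∧
      ∀ Z' : Set U, (Z' ∈ T ∧ Z' ⊆ Xᶜ ∧ ∀ Z'' : Set U, Z'' ∈ T → Z'' ⊆ Xᶜ → κ Z' ≤ κ Z'') →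
        Z ⊆ Z' := by
  classical
  obtain ⟨hsym, hsub, h0⟩ := hκ
  obtain ⟨hT0, hT1, hT2, hT3⟩ := hT
  set P : Set U → Prop := fun Z =>
    Z ∈ T ∧ Z ⊆ Xᶜ ∧ ∀ Z' : Set U, Z' ∈ T → Z' ⊆ Xᶜ → κ Z ≤ κ Z' with hP
  obtain ⟨Z, hZT, hZX⟩ := hex
  -- minimum order m
  set S : Set ℕ := {n | ∃ W : Set U, (W ∈ T ∧ W ⊆ Xᶜ) ∧ κ W = n} with hS
  have hSne : S.Nonempty := ⟨κ Z, Z, ⟨hZT, hZX⟩, rfl⟩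
  obtain ⟨W₀, ⟨hW₀T, hW₀X⟩, hW₀κ⟩ := Nat.sInf_mem hSne
  have hW₀min : ∀ Z' : Set U, Z' ∈ T → Z' ⊆ Xᶜ → κ W₀ ≤ κ Z' := by
    intro Z' h1 h2
    rw [hW₀κ]
    exact Nat.sInf_le ⟨Z', ⟨h1, h2⟩, rfl⟩
  have hPW₀ : P W₀ := ⟨hW₀T, hW₀X, hW₀min⟩
  -- intersection of two minimum separations is a minimum separation
  have key : ∀ Z₁ Z₂ : Set U, P Z₁ → P Z₂ → P (Z₁ ∩ Z₂) := by
    intro Z₁ Z₂ ⟨h1T, h1X, h1m⟩ ⟨h2T, h2X, h2m⟩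
    have heq : κ Z₁ = κ Z₂ := le_antisymm (h1m Z₂ h2T h2X) (h2m Z₁ h1T h1X)
    have hsubm := hsub Z₁ Z₂
    have hk1 : κ Z₁ < k := hT0 Z₁ h1T
    -- the intersection has order ≤ κ Z₁
    have hle : κ (Z₁ ∩ Z₂) ≤ κ Z₁ := by
      by_contra hlt
      push_neg at hlt
      have hcup : κ (Z₁ ∪ Z₂) < κ Z₂ := by omega
      have hcupk : κ (Z₁ ∪ Z₂) < k := lt_trans hcup (hT0 Z₂ h2T)
      have hcupT : Z₁ ∪ Z₂ ∈ T := by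
        rcases hT1 _ hcupk with h | h
        · exact h
        · exfalso
          obtain ⟨a, ha⟩ := hT2 Z₁ h1T Z₂ h2T _ h
          exact ha.2 (Or.inl ha.1.1)
      have hcupX : Z₁ ∪ Z₂ ⊆ Xᶜ := Set.union_subset h1X h2X
      exact absurd (h2m _ hcupT hcupX) (by omega)
    have hcapk : κ (Z₁ ∩ Z₂) < k := lt_of_le_of_lt hle hk1
    have hcapT : Z₁ ∩ Z₂ ∈ T := by
      rcases hT1 _ hcapk with h | h
      · exact h
      · exfalso
        obtain ⟨a, ha⟩ := hT2 Z₁ h1T Z₂ h2T _ h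
        exact ha.2 ha.1
    have hcapX : Z₁ ∩ Z₂ ⊆ Xᶜ := (Set.inter_subset_left).trans h1X
    refine ⟨hcapT, hcapX, fun Z' h1 h2 => le_trans hle (h1m Z' h1 h2)⟩
  -- choose a minimum separation of minimal cardinality
  set C : Set ℕ := {n | ∃ W : Set U, P W ∧ W.ncard = n} with hC
  have hCne : C.Nonempty := ⟨W₀.ncard, W₀, hPW₀, rfl⟩
  obtain ⟨Z₀, hPZ₀, hZ₀c⟩ := Nat.sInf_mem hCne
  have hleft : ∀ Z' : Set U, P Z' → Z₀ ⊆ Z' := by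
    intro Z' hPZ'
    have hPint := key Z₀ Z' hPZ₀ hPZ'
    have h1 : sInf C ≤ (Z₀ ∩ Z').ncard := Nat.sInf_le ⟨_, hPint, rfl⟩
    have h2 : (Z₀ ∩ Z').ncard ≤ Z₀.ncard :=
      Set.ncard_le_ncard Set.inter_subset_left (Set.toFinite _)
    have heq : Z₀ ∩ Z' = Z₀ :=
      Set.eq_of_subset_of_ncard_le Set.inter_subset_left (by omega) (Set.toFinite _)
    rw [← heq]
    exact Set.inter_subset_right
  refine ⟨Z₀, ⟨hPZ₀, hleft⟩, ?_⟩
  rintro Z₁ ⟨hPZ₁, hleft₁⟩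
  exact Set.Subset.antisymm (hleft₁ Z₀ hPZ₀) (hleft Z₁ hPZ₁)
end
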